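/- arXiv:2010.05015 — 9 statements merged into one kernel-verified Lean document; each statement's English description precedes it below -/
import Mathlib

section
/- Let r, s ∈ ℕ, let X : ℕ × ℕ → ℍ^{r×s} be a doubly indexed family of quaternionic matrices, and let K ≥ 0. Then Σ_{i∈ℕ} ‖Σ_{j∈ℕ} X_{ij}·f_j‖² ≤ K²·Σ_{j∈ℕ} ‖f_j‖² holds for every finitely supported f : ℕ → ℍ^s if and only if Σ_{i∈ℕ} ‖Σ_{j∈ℕ} χ(X_{ij})·g_j‖² ≤ K²·Σ_{j∈ℕ} ‖g_j‖² holds for every finitely supported g : ℕ → ℂ^{2s}. (Equivalently: the block operator τ = (X_{ij}) is bounded from ℓ²(ℕ,ℍ^s) to ℓ²(ℕ,ℍ^r) if and only if the block operator T = (χ(X_{ij})) is bounded from ℓ²(ℕ,ℂ^{2s}) to ℓ²(ℕ,ℂ^{2r}), and both operators have the same norm.) -/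
open Quaternion Matrix

noncomputable section

/-- The complex matrix `A` in the entrywise decomposition `X = A + B e₂` of a
quaternionic matrix. -/
def qmatA {r s : ℕ} (X : Matrix (Fin r) (Fin s) ℍ[ℝ]) : Matrix (Fin r) (Fin s) ℂ :=
  Matrix.of fun i j => ((X i j).re : ℂ) + (X i j).imI * Complex.I

/-- The complex matrix `B` in the entrywise decomposition `X = A + B e₂` of a
quaternionic matrix. -/
def qmatB {r s : ℕ} (X : Matrix (Fin r) (Fin s) ℍ[ℝ]) : Matrix (Fin r) (Fin s) ℂ :=
  Matrix.of fun i j => ((X i j).imJ : ℂ) + (X i j).imK * Complex.I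

/-- The map `χ` on quaternionic matrices: `χ(X) = [[A, B], [-conj B, conj A]]`,
a complex matrix of size `2r × 2s` (indexed by sum types). -/
def chiMat {r s : ℕ} (X : Matrix (Fin r) (Fin s) ℍ[ℝ]) :
    Matrix (Fin r ⊕ Fin r) (Fin s ⊕ Fin s) ℂ :=
  Matrix.fromBlocks (qmatA X) (qmatB X)
    (-(qmatB X).map (starRingEnd ℂ)) ((qmatA X).map (starRingEnd ℂ))

/-- Squared Euclidean norm of a quaternionic vector. -/
def sqnormH {r : ℕ} (v : Fin r → ℍ[ℝ]) : ℝ := ∑ a, ‖v a‖ ^ 2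

/-- Squared Euclidean norm of a complex vector indexed by a sum type. -/
def sqnormC2 {s : ℕ} (v : Fin s ⊕ Fin s → ℂ) : ℝ := ∑ a, ‖v a‖ ^ 2

/-!
The map `ι : ℍ^s → ℂ^{2s}`, `z + w e₂ ↦ (z, -conj w)`, sending a quaternion to the first column
of its `χ`-matrix, is an additive bijection that preserves squared norms, and multiplicativity of
`χ` gives `χ(X) (ι v) = ι (X v)`. Transporting finitely supported sequences along `ι` turns each
family of inequalities into the other, term by term.
-/

theorem Finsupp.forall_sum_le_iff_of_addEquiv {α V V' W W' : Type*}
    [AddCommMonoid V] [AddCommMonoid V'] [AddCommMonoid W] [AddCommMonoid W']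
    (e : V ≃+ W) (e' : V' ≃+ W') {nV : V → ℝ} {nW : W → ℝ} {nV' : V' → ℝ} {nW' : W' → ℝ}
    (hn : ∀ v, nW (e v) = nV v) (hn' : ∀ v, nW' (e' v) = nV' v)
    {A : α × α → V → V'} {B : α × α → W → W'} (hAB : ∀ p v, B p (e v) = e' (A p v)) (C : ℝ) :
    (∀ f : α →₀ V, ∀ N : Finset α,
        ∑ i ∈ N, nV' (∑ j ∈ f.support, A (i, j) (f j)) ≤ C * ∑ j ∈ f.support, nV (f j)) ↔
    (∀ g : α →₀ W, ∀ N : Finset α,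
        ∑ i ∈ N, nW' (∑ j ∈ g.support, B (i, j) (g j)) ≤ C * ∑ j ∈ g.support, nW (g j)) := by
  refine (Finsupp.mapRange.addEquiv e).toEquiv.forall_congr fun f => forall_congr' fun N => ?_
  have hsupp : (Finsupp.mapRange e e.map_zero f).support = f.support :=
    Finsupp.support_mapRange_of_injective e.map_zero f e.injective
  simp only [AddEquiv.toEquiv_eq_coe, AddEquiv.coe_toEquiv, Finsupp.mapRange.addEquiv_apply,
    hsupp, Finsupp.mapRange_apply, hAB, ← map_sum, hn, hn']

/-- `q = z + w e₂ ↦ (z, -conj w)`, the first column of `χ(q)`. -/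
def quatEquivComplexProd : ℍ[ℝ] ≃+ ℂ × ℂ where
  toFun q := (⟨q.re, q.imI⟩, ⟨-q.imJ, q.imK⟩)
  invFun p := ⟨p.1.re, p.1.im, -p.2.re, p.2.im⟩
  left_inv q := by ext <;> simp
  right_inv p := by ext <;> simp
  map_add' p q := by ext <;> simp [Complex.ext_iff, add_comm]

lemma quatEquivComplexProd_apply (q : ℍ[ℝ]) :
    quatEquivComplexProd q = (⟨q.re, q.imI⟩, ⟨-q.imJ, q.imK⟩) := rfl

/-- The first column of `χ(x v) = χ(x) χ(v)`. -/
lemma quatEquivComplexProd_mul (x v : ℍ[ℝ]) :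
    quatEquivComplexProd (x * v) =
      ((x.re + x.imI * Complex.I) * (quatEquivComplexProd v).1
          + (x.imJ + x.imK * Complex.I) * (quatEquivComplexProd v).2,
        -(starRingEnd ℂ) (x.imJ + x.imK * Complex.I) * (quatEquivComplexProd v).1
          + (starRingEnd ℂ) (x.re + x.imI * Complex.I) * (quatEquivComplexProd v).2) := by
  simp only [quatEquivComplexProd_apply, Prod.ext_iff, Complex.ext_iff, re_mul, imI_mul, imJ_mul,
    imK_mul, Complex.add_re, Complex.add_im, Complex.mul_re, Complex.mul_im, Complex.neg_re, Complex.neg_im, Complex.ofReal_re, Complex.ofReal_im,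
    Complex.I_re, Complex.I_im, map_add, map_mul, Complex.conj_ofReal, Complex.conj_I]
  refine ⟨⟨?_, ?_⟩, ?_, ?_⟩ <;> ring

lemma sq_norm_eq_sq_norm_quatEquivComplexProd (q : ℍ[ℝ]) :
    ‖q‖ ^ 2 = ‖(quatEquivComplexProd q).1‖ ^ 2 + ‖(quatEquivComplexProd q).2‖ ^ 2 := by
  rw [sq, ← Quaternion.normSq_eq_norm_mul_self, Quaternion.normSq_def', Complex.sq_norm,
    Complex.sq_norm]
  simp only [quatEquivComplexProd_apply, Complex.normSq_apply]
  ring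

def quatVecEquiv (ι : Type*) : (ι → ℍ[ℝ]) ≃+ (ι ⊕ ι → ℂ) where
  toFun v := Sum.elim (fun a => (quatEquivComplexProd (v a)).1)
    (fun a => (quatEquivComplexProd (v a)).2)
  invFun g a := quatEquivComplexProd.symm (g (.inl a), g (.inr a))
  left_inv v := funext fun a => quatEquivComplexProd.symm_apply_apply (v a)
  right_inv g := by
    ext (a | a) <;> simp only [Sum.elim_inl, Sum.elim_inr, AddEquiv.apply_symm_apply]
  map_add' u v := by
    ext (a | a) <;> simp only [Pi.add_apply, Sum.elim_inl, Sum.elim_inr, map_add, Prod.fst_add,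
      Prod.snd_add]

@[simp]
lemma quatVecEquiv_inl {ι : Type*} (v : ι → ℍ[ℝ]) (a : ι) :
    quatVecEquiv ι v (.inl a) = (quatEquivComplexProd (v a)).1 := rfl

@[simp]
lemma quatVecEquiv_inr {ι : Type*} (v : ι → ℍ[ℝ]) (a : ι) :
    quatVecEquiv ι v (.inr a) = (quatEquivComplexProd (v a)).2 := rfl

lemma sqnormC2_quatVecEquiv {s : ℕ} (v : Fin s → ℍ[ℝ]) :
    sqnormC2 (quatVecEquiv (Fin s) v) = sqnormH v := by
  simp only [sqnormC2, sqnormH, Fintype.sum_sum_type, quatVecEquiv_inl, quatVecEquiv_inr,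
    ← Finset.sum_add_distrib, sq_norm_eq_sq_norm_quatEquivComplexProd]

lemma chiMat_mulVec_quatVecEquiv {r s : ℕ} (X : Matrix (Fin r) (Fin s) ℍ[ℝ])
    (v : Fin s → ℍ[ℝ]) :
    chiMat X *ᵥ quatVecEquiv (Fin s) v = quatVecEquiv (Fin r) (X *ᵥ v) := by
  ext (i | i) <;>
  simp only [chiMat, mulVec, dotProduct, Fintype.sum_sum_type, fromBlocks_apply₁₁,
    fromBlocks_apply₁₂, fromBlocks_apply₂₁, fromBlocks_apply₂₂, quatVecEquiv_inl,
    quatVecEquiv_inr, map_sum, Prod.fst_sum, Prod.snd_sum, quatEquivComplexProd_mul, qmatA, qmatB,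
    of_apply, Matrix.map_apply, Matrix.neg_apply, Finset.sum_add_distrib]

theorem chiMat_block_operator_bounded_iff_general (r s : ℕ)
    (X : ℕ × ℕ → Matrix (Fin r) (Fin s) ℍ[ℝ]) (K : ℝ) :
    (∀ f : ℕ →₀ (Fin s → ℍ[ℝ]), ∀ N : Finset ℕ,
        ∑ i ∈ N, sqnormH (∑ j ∈ f.support, (X (i, j)) *ᵥ f j) ≤
          K ^ 2 * ∑ j ∈ f.support, sqnormH (f j)) ↔
    (∀ g : ℕ →₀ (Fin s ⊕ Fin s → ℂ), ∀ N : Finset ℕ,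
        ∑ i ∈ N, sqnormC2 (∑ j ∈ g.support, (chiMat (X (i, j))) *ᵥ g j) ≤
          K ^ 2 * ∑ j ∈ g.support, sqnormC2 (g j)) :=
  Finsupp.forall_sum_le_iff_of_addEquiv (quatVecEquiv (Fin s)) (quatVecEquiv (Fin r))
    sqnormC2_quatVecEquiv sqnormC2_quatVecEquiv
    (fun p v => chiMat_mulVec_quatVecEquiv (X p) v) (K ^ 2)

/-- The block operator `τ = (X_{ij})` is bounded with norm at most `K` from
`ℓ²(ℕ, ℍ^s)` to `ℓ²(ℕ, ℍ^r)` if and only if the block operator `T = (χ(X_{ij}))` is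
bounded with norm at most `K` from `ℓ²(ℕ, ℂ^{2s})` to `ℓ²(ℕ, ℂ^{2r})`; in particular
both have the same norm.  Boundedness is expressed through the defining inequalities
on finitely supported sequences (with arbitrary finite partial sums on the left). -/
theorem chiMat_block_operator_bounded_iff (r s : ℕ)
    (X : ℕ × ℕ → Matrix (Fin r) (Fin s) ℍ[ℝ]) (K : ℝ) (hK : 0 ≤ K) :
    (∀ f : ℕ →₀ (Fin s → ℍ[ℝ]), ∀ N : Finset ℕ,
        ∑ i ∈ N, sqnormH (∑ j ∈ f.support, (X (i, j)) *ᵥ f j) ≤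
          K ^ 2 * ∑ j ∈ f.support, sqnormH (f j)) ↔
    (∀ g : ℕ →₀ (Fin s ⊕ Fin s → ℂ), ∀ N : Finset ℕ,
        ∑ i ∈ N, sqnormC2 (∑ j ∈ g.support, (chiMat (X (i, j))) *ᵥ g j) ≤
          K ^ 2 * ∑ j ∈ g.support, sqnormC2 (g j)) :=
  chiMat_block_operator_bounded_iff_general r s X K
end
end

section
/- For every m ∈ ℕ, the quaternionic Appell polynomial Q_m : ℍ → ℍ is Fueter hyperholomorphic: D Q_m = 0 at every point of ℍ. -/
open Quaternion

noncomputable section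

/-- The quaternion unit `e₁`. -/
def e1 : ℍ[ℝ] := ⟨0, 1, 0, 0⟩

/-- The quaternion unit `e₂`. -/
def e2 : ℍ[ℝ] := ⟨0, 0, 1, 0⟩

/-- The quaternion unit `e₃`. -/
def e3 : ℍ[ℝ] := ⟨0, 0, 0, 1⟩

/-- The coefficients `T^m_j = 2(m-j+1)/((m+1)(m+2))`. -/
def appellT (m j : ℕ) : ℝ :=
  (2 * ((m : ℝ) - (j : ℝ) + 1)) / (((m : ℝ) + 1) * ((m : ℝ) + 2))

/-- The `m`-th quaternionic Appell polynomial
`Q_m(x) = Σ_{j=0}^m T^m_j x^{m-j} x̄^j`. -/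
def appellQ (m : ℕ) (x : ℍ[ℝ]) : ℍ[ℝ] :=
  ∑ j ∈ Finset.range (m + 1), appellT m j • (x ^ (m - j) * (star x) ^ j)

/-- The Cauchy–Fueter operator `Df = ∂f/∂x₀ + e₁ ∂f/∂x₁ + e₂ ∂f/∂x₂ + e₃ ∂f/∂x₃`,
with the directional derivatives taken along `1, e₁, e₂, e₃`. -/
def fueterD (f : ℍ[ℝ] → ℍ[ℝ]) (x : ℍ[ℝ]) : ℍ[ℝ] :=
  fderiv ℝ f x 1 + e1 * fderiv ℝ f x e1 + e2 * fderiv ℝ f x e2 + e3 * fderiv ℝ f x e3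

/-! The differential of `y ↦ y ^ a * ȳ ^ b` at `x` is
`v ↦ ∑ x ^ (a-1-i) v x ^ i x̄ ^ b + ∑ x ^ a x̄ ^ (b-1-i) v̄ x̄ ^ i`, and the Fueter operator contracts
it through the identities `∑ₑ e p e = -2 p̄` and `∑ₑ e p ē = 2 (p + p̄)`, `e` ranging over
`1, e₁, e₂, e₃`. Hence `D Q_m (x)` is an expression in the commuting quaternions `x` and `x̄`.
Multiplied by `x - x̄`, its geometric sums collapse and the weights `m - j + 1` make all terms
cancel. The factor `x - x̄` vanishes at real `x`, so the cancellation is done in `ℝ[X]` instead,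
with `X` and `C (2 Re x) - X` in place of `x` and `x̄ = 2 Re x - x`, and then evaluated at `x`. -/

open Finset Polynomial

instance {R : Type*} [CommRing R] [StarRing R] [TrivialStar R] : StarModule R ℍ[R] :=
  ⟨fun r a => by ext <;> simp⟩

-- `simp` has no component lemmas for the numeral `2 : ℍ[R]`, but it does for its coercion form.
lemma Quaternion.coe_two {R : Type*} [CommRing R] : ((2 : R) : ℍ[R]) = 2 := rfl

def fueterSymbol : (ℍ[ℝ] → ℍ[ℝ]) →ₗ[ℝ] ℍ[ℝ] where
  toFun g := g 1 + e1 * g e1 + e2 * g e2 + e3 * g e3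
  map_add' g h := by simp only [Pi.add_apply, mul_add]; abel
  map_smul' c g := by simp only [Pi.smul_apply, mul_smul_comm, smul_add, RingHom.id_apply]

lemma fueterD_eq_fueterSymbol (f : ℍ[ℝ] → ℍ[ℝ]) (x : ℍ[ℝ]) :
    fueterD f x = fueterSymbol (fderiv ℝ f x) := rfl

lemma fueterSymbol_mul_mul (p q : ℍ[ℝ]) :
    fueterSymbol (fun v => p * v * q) = -2 * star p * q := by
  rw [← Quaternion.coe_two]
  ext <;> simp [fueterSymbol] <;> simp [e1, e2, e3] <;> ring

lemma fueterSymbol_mul_star_mul (p q : ℍ[ℝ]) :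
    fueterSymbol (fun v => p * star v * q) = 2 * (p + star p) * q := by
  rw [← Quaternion.coe_two]
  ext <;> simp [fueterSymbol] <;> simp [e1, e2, e3] <;> ring

lemma fueterD_sum_smul {ι : Type*} (s : Finset ι) (c : ι → ℝ) (f : ι → ℍ[ℝ] → ℍ[ℝ])
    (x : ℍ[ℝ]) (hf : ∀ i ∈ s, DifferentiableAt ℝ (f i) x) :
    fueterD (fun y => ∑ i ∈ s, c i • f i y) x = ∑ i ∈ s, c i • fueterD (f i) x := by
  rw [fueterD_eq_fueterSymbol,
    fderiv_fun_sum (A := fun i y => c i • f i y) fun i hi => (hf i hi).const_smul (c i)]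
  simp only [FunLike.coe_sum, map_sum]
  refine sum_congr rfl fun i hi => ?_
  rw [fderiv_fun_const_smul (hf i hi), FunLike.coe_smul, map_smul, fueterD_eq_fueterSymbol]

lemma fderiv_pow_mul_star_pow (a b : ℕ) (x : ℍ[ℝ]) :
    ⇑(fderiv ℝ (fun y => y ^ a * star y ^ b) x) =
      (∑ i ∈ range a, fun v => x ^ (a - 1 - i) * v * (x ^ i * star x ^ b)) +
      ∑ i ∈ range b, fun v => x ^ a * star x ^ (b - 1 - i) * star v * star x ^ i := by
  have h : HasFDerivAt (fun y : ℍ[ℝ] => y ^ a * star y ^ b) _ x :=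
    (hasFDerivAt_pow' a).fun_mul' ((starL' ℝ : ℍ[ℝ] ≃L[ℝ] ℍ[ℝ]).hasFDerivAt.fun_pow' b)
  ext1 v
  simp [h.fderiv, mul_sum, sum_mul, mul_assoc, add_comm]

def fueterMonomial {R : Type*} [Ring R] (X Y : R) (a b : ℕ) : R :=
  ∑ i ∈ range a, -2 * Y ^ (a - 1 - i) * (X ^ i * Y ^ b) +
  ∑ i ∈ range b, 2 * (X ^ a * Y ^ (b - 1 - i) + X ^ (b - 1 - i) * Y ^ a) * Y ^ i

lemma fueterD_pow_mul_star_pow (a b : ℕ) (x : ℍ[ℝ]) :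
    fueterD (fun y => y ^ a * star y ^ b) x = fueterMonomial x (star x) a b := by
  simp only [fueterD_eq_fueterSymbol, fderiv_pow_mul_star_pow, map_add, map_sum,
    fueterSymbol_mul_mul, fueterSymbol_mul_star_mul, fueterMonomial, star_mul, star_pow, star_star]

lemma map_fueterMonomial {R S F : Type*} [Ring R] [Ring S] [FunLike F R S] [RingHomClass F R S]
    (f : F) (X Y : R) (a b : ℕ) :
    f (fueterMonomial X Y a b) = fueterMonomial (f X) (f Y) a b := by
  simp [fueterMonomial, map_ofNat]

section CommRing

variable {R : Type*} [CommRing R]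

lemma sub_mul_fueterMonomial (X Y : R) (a b : ℕ) :
    (X - Y) * fueterMonomial X Y a b =
      2 * (X ^ b * Y ^ a - X ^ a * Y ^ b + b * (X ^ (a + 1) * Y ^ (b - 1) - X ^ a * Y ^ b)) := by
  have hX : ∑ i ∈ range a, -2 * Y ^ (a - 1 - i) * (X ^ i * Y ^ b) =
      -2 * Y ^ b * ∑ i ∈ range a, X ^ i * Y ^ (a - 1 - i) := by
    rw [mul_sum]; exact sum_congr rfl fun i _ => by ring
  have hY : ∑ i ∈ range b, 2 * (X ^ a * Y ^ (b - 1 - i) + X ^ (b - 1 - i) * Y ^ a) * Y ^ i =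
      b * (2 * X ^ a * Y ^ (b - 1)) + 2 * Y ^ a * ∑ i ∈ range b, Y ^ i * X ^ (b - 1 - i) := by
    have hpow : ∀ i ∈ range b, Y ^ (b - 1 - i) * Y ^ i = Y ^ (b - 1) := fun i hi => by
      rw [← pow_add, Nat.sub_add_cancel (by simp at hi; omega)]
    calc _ = ∑ i ∈ range b, (2 * X ^ a * Y ^ (b - 1) + 2 * Y ^ a * (Y ^ i * X ^ (b - 1 - i))) :=
          sum_congr rfl fun i hi => by linear_combination 2 * X ^ a * hpow i hi
      _ = _ := by rw [sum_add_distrib, sum_const, card_range, nsmul_eq_mul, mul_sum]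
  have hb : (b : R) * Y ^ (b - 1) * Y = b * Y ^ b := by
    rcases b with _ | b <;> simp [pow_succ, mul_assoc]
  rw [fueterMonomial, hX, hY]
  linear_combination (-2 * Y ^ b) * geom_sum₂_mul X Y a - 2 * Y ^ a * geom_sum₂_mul Y X b
    - 2 * X ^ a * hb

lemma sum_weighted_monomial_differences_eq_zero (X Y : R) (m : ℕ) :
    ∑ j ∈ range (m + 1), ((m + 1 - j : ℕ) : R) * (X ^ j * Y ^ (m - j) - X ^ (m - j) * Y ^ j
      + j * (X ^ (m - j + 1) * Y ^ (j - 1) - X ^ (m - j) * Y ^ j)) = 0 := by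
  have hreflect : ∑ j ∈ range (m + 1), ((m + 1 - j : ℕ) : R) * (X ^ j * Y ^ (m - j)) =
      ∑ k ∈ range (m + 1), ((k + 1 : ℕ) : R) * (X ^ (m - k) * Y ^ k) := by
    rw [← sum_range_reflect]
    refine sum_congr rfl fun k hk => ?_
    have hk : k ≤ m := Nat.lt_succ_iff.mp (mem_range.mp hk)
    rw [show m + 1 - 1 - k = m - k by omega, show m + 1 - (m - k) = k + 1 by omega,
      Nat.sub_sub_self hk]
  have hshift : ∑ j ∈ range (m + 1), ((m + 1 - j : ℕ) : R) * (j * (X ^ (m - j + 1) * Y ^ (j - 1))) =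
      ∑ k ∈ range (m + 1), ((m - k : ℕ) : R) * ((k + 1 : ℕ) * (X ^ (m - k) * Y ^ k)) := by
    rw [sum_range_succ', sum_range_succ]
    simp only [Nat.cast_zero, zero_mul, mul_zero, add_zero, Nat.sub_self]
    refine sum_congr rfl fun k hk => ?_
    have hk : k < m := mem_range.mp hk
    rw [show m + 1 - (k + 1) = m - k by omega, show m - (k + 1) + 1 = m - k by omega,
      add_tsub_cancel_right]
  calc _ = ∑ j ∈ range (m + 1), ((m + 1 - j : ℕ) : R) * (X ^ j * Y ^ (m - j))
        + ∑ j ∈ range (m + 1), ((m + 1 - j : ℕ) : R) * (j * (X ^ (m - j + 1) * Y ^ (j - 1)))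
        - ∑ j ∈ range (m + 1), ((m + 1 - j : ℕ) : R) * ((j + 1 : ℕ) * (X ^ (m - j) * Y ^ j)) := by
          rw [← sum_add_distrib, ← sum_sub_distrib]
          exact sum_congr rfl fun j _ => by push_cast; ring
    _ = 0 := by
      rw [hreflect, hshift, ← sum_add_distrib, ← sum_sub_distrib]
      refine sum_eq_zero fun k hk => ?_
      have hk : k ≤ m := Nat.lt_succ_iff.mp (mem_range.mp hk)
      rw [show m + 1 - k = (m - k) + 1 by omega]
      push_cast
      ring

lemma sub_mul_sum_weighted_fueterMonomial (X Y : R) (m : ℕ) :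
    (X - Y) * ∑ j ∈ range (m + 1), ((m + 1 - j : ℕ) : R) * fueterMonomial X Y (m - j) j = 0 := by
  simp_rw [mul_sum, mul_left_comm (X - Y), sub_mul_fueterMonomial, mul_left_comm _ (2 : R),
    ← mul_sum, sum_weighted_monomial_differences_eq_zero, mul_zero]

lemma appellT_eq_mul {m j : ℕ} (hj : j ≤ m) :
    appellT m j = 2 / ((m + 1) * (m + 2)) * ((m + 1 - j : ℕ) : ℝ) := by
  rw [appellT, Nat.cast_sub (by omega)]
  push_cast
  ring

lemma sum_appellT_smul_fueterMonomial_eq_zero [IsDomain R] [Algebra ℝ R] {X Y : R} (h : X ≠ Y)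
    (m : ℕ) : ∑ j ∈ range (m + 1), appellT m j • fueterMonomial X Y (m - j) j = 0 := by
  calc _ = (2 / ((m + 1) * (m + 2)) : ℝ) •
        ∑ j ∈ range (m + 1), ((m + 1 - j : ℕ) : R) * fueterMonomial X Y (m - j) j := by
        rw [smul_sum]
        refine sum_congr rfl fun j hj => ?_
        rw [appellT_eq_mul (Nat.lt_succ_iff.mp (mem_range.mp hj)), mul_smul,
          Nat.cast_smul_eq_nsmul, nsmul_eq_mul]
    _ = 0 := by
      rw [(mul_eq_zero.mp (sub_mul_sum_weighted_fueterMonomial X Y m)).resolve_left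
        (sub_ne_zero.mpr h), smul_zero]

end CommRing

lemma aeval_two_re_sub_X (x : ℍ[ℝ]) : aeval x (C (2 * x.re) - X) = star x := by
  simp [Quaternion.star_eq_two_re_sub]

/-- Every quaternionic Appell polynomial `Q_m` is Fueter hyperholomorphic:
`D Q_m = 0` at every point of `ℍ`. -/
theorem appellQ_fueter_hyperholomorphic (m : ℕ) (x : ℍ[ℝ]) :
    fueterD (appellQ m) x = 0 := by
  have hXY : (X : ℝ[X]) ≠ C (2 * x.re) - X := fun h => by
    have := congrArg (coeff · 1) h
    norm_num at this
  unfold appellQ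
  rw [fueterD_sum_smul _ _ _ x fun j _ => by fun_prop]
  simpa only [fueterD_pow_mul_star_pow, map_sum, map_smul, map_zero, map_fueterMonomial, aeval_X,
    aeval_two_re_sub_X] using congrArg (aeval x) (sum_appellT_smul_fueterMonomial_eq_zero hXY m)
end
end

section
/- For every m ≥ 1, the quaternionic Appell polynomials satisfy the Appell property (1/2)·(∂Q_m/∂x₀ − e₁·∂Q_m/∂x₁ − e₂·∂Q_m/∂x₂ − e₃·∂Q_m/∂x₃) = m·Q_{m−1} at every point of ℍ. -/
open Quaternion

noncomputable section

/-- The conjugate Cauchy–Fueter operator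
`D̄f = ∂f/∂x₀ - e₁ ∂f/∂x₁ - e₂ ∂f/∂x₂ - e₃ ∂f/∂x₃`. -/
def fueterDBar (f : ℍ[ℝ] → ℍ[ℝ]) (x : ℍ[ℝ]) : ℍ[ℝ] :=
  fderiv ℝ f x 1 - e1 * fderiv ℝ f x e1 - e2 * fderiv ℝ f x e2 - e3 * fderiv ℝ f x e3

/-!
Differentiating `x ^ a * x̄ ^ b` produces sandwich terms `v ↦ p * v * q` and `v ↦ p * v̄ * q`,
which `D̄` sends to `2 (p + p̄) q` and `-2 p̄ q`, because
`p - e₁ p e₁ - e₂ p e₂ - e₃ p e₃ = 4 Re p` and `p + e₁ p e₁ + e₂ p e₂ + e₃ p e₃ = -2 p̄`.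
As `x` commutes with `x̄`, `½ D̄ (x ^ (m - j) x̄ ^ j)` is a sum of monomials
`x ^ (m - 1 - q) x̄ ^ q`, and comparing their coefficients reduces the Appell property to
`m T^{m-1}_q = (m - q) T^m_q + Σ_{j ≤ q} (T^m_j - T^m_{m-q+j})`,
where every difference `T^m_j - T^m_{m-q+j}` equals `2 (m - q) / ((m + 1) (m + 2))`.
-/

open Finset

instance inst_s4 {R : Type*} [CommRing R] [StarRing R] [TrivialStar R] : StarModule R ℍ[R] :=
  ⟨fun r a => by ext <;> simp⟩

def fueterContraction : (ℍ[ℝ] → ℍ[ℝ]) →ₗ[ℝ] ℍ[ℝ] where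
  toFun L := L 1 - e1 * L e1 - e2 * L e2 - e3 * L e3
  map_add' L L' := by simp only [Pi.add_apply, mul_add]; abel
  map_smul' c L := by simp only [Pi.smul_apply, mul_smul_comm, smul_sub, RingHom.id_apply]

lemma fueterContraction_apply (L : ℍ[ℝ] → ℍ[ℝ]) :
    fueterContraction L = L 1 - e1 * L e1 - e2 * L e2 - e3 * L e3 := rfl

lemma fueterDBar_eq_fueterContraction (f : ℍ[ℝ] → ℍ[ℝ]) (x : ℍ[ℝ]) :
    fueterDBar f x = fueterContraction (fderiv ℝ f x) := rfl

lemma fueterContraction_mul_mul (p q : ℍ[ℝ]) :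
    fueterContraction (fun v => p * v * q) = (2 : ℝ) • ((p + star p) * q) := by
  have sandwich : p - e1 * p * e1 - e2 * p * e2 - e3 * p * e3 = (2 : ℝ) • (p + star p) := by
    ext <;> simp [Quaternion.re_mul, Quaternion.imI_mul, Quaternion.imJ_mul,
      Quaternion.imK_mul] <;> simp [e1, e2, e3]
    ring
  calc _ = (p - e1 * p * e1 - e2 * p * e2 - e3 * p * e3) * q := by
        simp only [fueterContraction_apply, one_mul, sub_mul, mul_assoc]
    _ = _ := by rw [sandwich, smul_mul_assoc]

lemma fueterContraction_mul_star_mul (p q : ℍ[ℝ]) :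
    fueterContraction (fun v => p * star v * q) = -(2 : ℝ) • (star p * q) := by
  have sandwich : p + e1 * p * e1 + e2 * p * e2 + e3 * p * e3 = -(2 : ℝ) • star p := by
    ext <;> simp [Quaternion.re_mul, Quaternion.imI_mul, Quaternion.imJ_mul,
      Quaternion.imK_mul] <;> simp [e1, e2, e3] <;> ring
  have star_e1 : star e1 = -e1 := star_eq_neg.mpr rfl
  have star_e2 : star e2 = -e2 := star_eq_neg.mpr rfl
  have star_e3 : star e3 = -e3 := star_eq_neg.mpr rfl
  calc _ = (p + e1 * p * e1 + e2 * p * e2 + e3 * p * e3) * q := by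
        simp only [fueterContraction_apply, star_one, one_mul, star_e1, star_e2, star_e3,
          mul_neg, neg_mul, sub_neg_eq_add, add_mul, mul_assoc]
    _ = _ := by rw [sandwich, smul_mul_assoc]

lemma fueterDBar_sum_smul {ι : Type*} (s : Finset ι) (c : ι → ℝ) (f : ι → ℍ[ℝ] → ℍ[ℝ])
    (x : ℍ[ℝ]) (hf : ∀ i ∈ s, DifferentiableAt ℝ (f i) x) :
    fueterDBar (fun y => ∑ i ∈ s, c i • f i y) x = ∑ i ∈ s, c i • fueterDBar (f i) x := by
  simp only [fueterDBar_eq_fueterContraction]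
  rw [fderiv_fun_sum (A := fun i y => c i • f i y) fun i hi => (hf i hi).const_smul (c i),
    FunLike.coe_sum, map_sum]
  refine sum_congr rfl fun i hi => ?_
  rw [fderiv_fun_const_smul (hf i hi), FunLike.coe_smul, map_smul]

lemma pow_add_star_pow_mul_pow_mul_star_pow {A : Type*} [Semiring A] [StarRing A] (x : A)
    [IsStarNormal x] (k i j : ℕ) :
    (x ^ k + star (x ^ k)) * (x ^ i * star x ^ j)
      = x ^ (k + i) * star x ^ j + x ^ i * star x ^ (k + j) := by
  rw [add_mul, ← mul_assoc, ← pow_add, star_pow, ← mul_assoc,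
    ((star_comm_self (x := x)).pow_pow k i).eq, mul_assoc, ← pow_add]

lemma star_pow_mul_star_pow_mul_star_pow {A : Type*} [Monoid A] [StarMul A] (x : A)
    (a b i : ℕ) : star (x ^ a * star x ^ b) * star x ^ i = x ^ b * star x ^ (a + i) := by
  rw [star_mul, star_pow, star_star, star_pow, mul_assoc, ← pow_add]

lemma sum_range_sub_one_sub_eq_sum_Ico {M : Type*} [AddCommMonoid M] (f : ℕ → M) {j n : ℕ}
    (hj : j ≤ n) : ∑ i ∈ range (n - j), f (n - 1 - i) = ∑ q ∈ Ico j n, f q := by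
  rw [sum_Ico_eq_sum_range, ← sum_range_reflect]
  refine sum_congr rfl fun i hi => ?_
  have := mem_range.mp hi
  congr 1
  omega

lemma sum_smul_Ico_comm {R E : Type*} [Ring R] [AddCommGroup E] [Module R E] (m : ℕ)
    (c : ℕ → R) (M : ℕ → E) :
    ∑ j ∈ range (m + 1), c j • ((m - j) • M j + ∑ q ∈ Ico j m, M q - ∑ q ∈ Ico (m - j) m, M q)
      = ∑ q ∈ range m, (c q * (m - q : ℕ) + ∑ j ∈ range (q + 1), c j
          - ∑ j ∈ Ico (m - q) (m + 1), c j) • M q := by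
  have diagonal : ∑ j ∈ range (m + 1), c j • (m - j) • M j
      = ∑ q ∈ range m, (c q * (m - q : ℕ)) • M q := by
    rw [sum_range_succ, Nat.sub_self, zero_smul, smul_zero, add_zero]
    exact sum_congr rfl fun q _ => by rw [mul_smul, Nat.cast_smul_eq_nsmul]
  have upper : ∑ j ∈ range (m + 1), ∑ q ∈ Ico j m, c j • M q
      = ∑ q ∈ range m, ∑ j ∈ range (q + 1), c j • M q :=
    sum_comm' fun j q => by simp only [mem_range, mem_Ico]; omega
  have lower : ∑ j ∈ range (m + 1), ∑ q ∈ Ico (m - j) m, c j • M q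
      = ∑ q ∈ range m, ∑ j ∈ Ico (m - q) (m + 1), c j • M q :=
    sum_comm' fun j q => by simp only [mem_range, mem_Ico]; omega
  simp only [smul_add, smul_sub, smul_sum, sum_add_distrib, sum_sub_distrib, diagonal, upper,
    lower, add_smul, sub_smul, sum_smul]

def conjMonomial (n j : ℕ) (x : ℍ[ℝ]) : ℍ[ℝ] := x ^ (n - j) * star x ^ j

lemma conjMonomial_of_add_eq {a b n : ℕ} (h : a + b = n) (x : ℍ[ℝ]) :
    conjMonomial n b x = x ^ a * star x ^ b := by
  subst h; simp [conjMonomial]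

lemma differentiable_conjMonomial (n j : ℕ) : Differentiable ℝ (conjMonomial n j) := by
  unfold conjMonomial; fun_prop

lemma fderiv_conjMonomial (n j : ℕ) (x : ℍ[ℝ]) :
    ⇑(fderiv ℝ (conjMonomial n j) x) =
      (∑ i ∈ range (n - j), fun v => x ^ (n - j - 1 - i) * v * (x ^ i * star x ^ j))
        + ∑ i ∈ range j, fun v => x ^ (n - j) * star x ^ (j - 1 - i) * star v * star x ^ i := by
  have h := (hasFDerivAt_pow' (𝕜 := ℝ) (n - j) (x := x)).mul'
    ((hasFDerivAt_id x).star.pow' j)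
  have hfun : (fun y : ℍ[ℝ] => y ^ (n - j)) * (fun y => star (id y)) ^ j = conjMonomial n j := by
    funext y; simp [conjMonomial]
  rw [← hfun, h.fderiv]
  funext v
  simp [Finset.sum_apply, mul_sum, sum_mul, mul_assoc, add_comm]

lemma fueterDBar_conjMonomial (n j : ℕ) (hj : j ≤ n) (x : ℍ[ℝ]) :
    fueterDBar (conjMonomial n j) x = (2 : ℝ) • (∑ i ∈ range (n - j),
      (conjMonomial (n - 1) j x + conjMonomial (n - 1) (n - 1 - i) x)
        - ∑ i ∈ range j, conjMonomial (n - 1) (n - j + i) x) := by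
  have pow_term : ∀ i ∈ range (n - j),
      (x ^ (n - j - 1 - i) + star (x ^ (n - j - 1 - i))) * (x ^ i * star x ^ j)
        = conjMonomial (n - 1) j x + conjMonomial (n - 1) (n - 1 - i) x := by
    intro i hi
    have hi := mem_range.mp hi
    rw [pow_add_star_pow_mul_pow_mul_star_pow,
      conjMonomial_of_add_eq (a := n - j - 1 - i + i) (by omega),
      conjMonomial_of_add_eq (a := i) (by omega), show n - j - 1 - i + j = n - 1 - i by omega]
  have star_term : ∀ i ∈ range j, star (x ^ (n - j) * star x ^ (j - 1 - i)) * star x ^ i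
      = conjMonomial (n - 1) (n - j + i) x := by
    intro i hi
    have hi := mem_range.mp hi
    rw [star_pow_mul_star_pow_mul_star_pow, conjMonomial_of_add_eq (a := j - 1 - i) (by omega)]
  rw [fueterDBar_eq_fueterContraction, fderiv_conjMonomial, map_add, map_sum, map_sum]
  simp only [fueterContraction_mul_mul, fueterContraction_mul_star_mul, neg_smul,
    sum_neg_distrib, ← smul_sum]
  rw [sum_congr rfl pow_term, sum_congr rfl star_term, smul_sub, sub_eq_add_neg]

lemma half_fueterDBar_conjMonomial (n j : ℕ) (hj : j ≤ n) (x : ℍ[ℝ]) :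
    (1 / 2 : ℝ) • fueterDBar (conjMonomial n j) x = (n - j) • conjMonomial (n - 1) j x
      + ∑ q ∈ Ico j n, conjMonomial (n - 1) q x
      - ∑ q ∈ Ico (n - j) n, conjMonomial (n - 1) q x := by
  rw [fueterDBar_conjMonomial n j hj, smul_smul, sum_add_distrib, sum_const, card_range,
    sum_range_sub_one_sub_eq_sum_Ico (conjMonomial (n - 1) · x) hj,
    sum_Ico_eq_sum_range _ (n - j), Nat.sub_sub_self hj]
  norm_num

lemma appellQ_eq_sum_conjMonomial (m : ℕ) :
    appellQ m = fun x => ∑ j ∈ range (m + 1), appellT m j • conjMonomial m j x := rfl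

lemma natCast_smul_appellQ_sub_one (m : ℕ) (x : ℍ[ℝ]) :
    (m : ℝ) • appellQ (m - 1) x
      = ∑ q ∈ range m, ((m : ℝ) * appellT (m - 1) q) • conjMonomial (m - 1) q x := by
  cases m with
  | zero => simp
  | succ n => simp only [appellQ_eq_sum_conjMonomial, Nat.add_sub_cancel, smul_sum, smul_smul]

lemma natCast_mul_appellT_sub_one {m q : ℕ} (hq : q < m) :
    (m : ℝ) * appellT (m - 1) q = appellT m q * (m - q : ℕ) + ∑ j ∈ range (q + 1), appellT m j
      - ∑ j ∈ Ico (m - q) (m + 1), appellT m j := by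
  have shift (j : ℕ) :
      appellT m j - appellT m (m - q + j) = 2 * (m - q : ℕ) / ((m + 1) * (m + 2)) := by
    simp only [appellT]
    push_cast [hq.le]
    ring
  rw [sum_Ico_eq_sum_range, show m + 1 - (m - q) = q + 1 by omega, add_sub_assoc,
    ← sum_sub_distrib, sum_congr rfl fun j _ => shift j, sum_const, card_range, nsmul_eq_mul]
  simp only [appellT]
  push_cast [hq.le, Nat.one_le_of_lt hq]
  have hm : (m : ℝ) ≠ 0 := Nat.cast_ne_zero.mpr (by omega)
  rw [sub_add_cancel, show (m : ℝ) - 1 + 2 = m + 1 by ring]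
  field_simp
  ring

theorem appellQ_appell_property_general (m : ℕ) (x : ℍ[ℝ]) :
    (1 / 2 : ℝ) • fueterDBar (appellQ m) x = (m : ℝ) • appellQ (m - 1) x := by
  calc (1 / 2 : ℝ) • fueterDBar (appellQ m) x
      = ∑ j ∈ range (m + 1), appellT m j • ((m - j) • conjMonomial (m - 1) j x
          + ∑ q ∈ Ico j m, conjMonomial (m - 1) q x
          - ∑ q ∈ Ico (m - j) m, conjMonomial (m - 1) q x) := by
        rw [appellQ_eq_sum_conjMonomial, fueterDBar_sum_smul _ _ _ _
          fun j _ => (differentiable_conjMonomial m j).differentiableAt, smul_sum]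
        refine sum_congr rfl fun j hj => ?_
        rw [smul_comm, half_fueterDBar_conjMonomial m j (by have := mem_range.mp hj; omega)]
    _ = ∑ q ∈ range m, (appellT m q * (m - q : ℕ) + ∑ j ∈ range (q + 1), appellT m j
          - ∑ j ∈ Ico (m - q) (m + 1), appellT m j) • conjMonomial (m - 1) q x :=
        sum_smul_Ico_comm m _ _
    _ = (m : ℝ) • appellQ (m - 1) x := by
        rw [natCast_smul_appellQ_sub_one]
        exact sum_congr rfl fun q hq => by rw [natCast_mul_appellT_sub_one (mem_range.mp hq)]

/-- The Appell property: `(1/2) D̄ Q_m = m Q_{m-1}` for every `m ≥ 1`. -/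
theorem appellQ_appell_property (m : ℕ) (hm : 1 ≤ m) (x : ℍ[ℝ]) :
    (1 / 2 : ℝ) • fueterDBar (appellQ m) x = (m : ℝ) • appellQ (m - 1) x :=
  appellQ_appell_property_general m x
end
end

section
/- For every m ∈ ℕ and every x ∈ ℍ, Q_m(x) = −Δ(x^{m+2})/(2(m+1)(m+2)), where Δ = ∂²/∂x₀² + ∂²/∂x₁² + ∂²/∂x₂² + ∂²/∂x₃² is the four-dimensional Laplacian applied to the quaternionic power function x ↦ x^{m+2}. -/
open Quaternion

noncomputable section

/-- Second directional derivative of `f` along the direction `v`. -/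
def dir2 (f : ℍ[ℝ] → ℍ[ℝ]) (v x : ℍ[ℝ]) : ℍ[ℝ] :=
  fderiv ℝ (fun y => fderiv ℝ f y v) x v

/-- The four-dimensional Laplacian
`Δf = ∂²f/∂x₀² + ∂²f/∂x₁² + ∂²f/∂x₂² + ∂²f/∂x₃²`. -/
def quatLaplacian (f : ℍ[ℝ] → ℍ[ℝ]) (x : ℍ[ℝ]) : ℍ[ℝ] :=
  dir2 f 1 x + dir2 f e1 x + dir2 f e2 x + dir2 f e3 x

/-!
Along any direction `v`, the product rule applied to `y ^ (n + 1) = y ^ n * y` gives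
`∂²ᵥ(y ^ (n + 1)) = ∂²ᵥ(y ^ n) x + 2 ∂ᵥ(y ^ n) v`, where `∂ᵥ(y ^ n) = Σᵢ x ^ (n - 1 - i) v x ^ i`.
Since `q + e₁ q e₁ + e₂ q e₂ + e₃ q e₃ = -2 q̄`, summing over the four directions yields the
recursion `Δ(y ^ (n + 1)) = Δ(y ^ n) x - 4 Σ_{i<n} x ^ (n - 1 - i) x̄ ^ i`. As `x` commutes with
`x̄`, induction solves it as `Δ(y ^ (n + 1)) = -4 Σ_{j<n} (n - j) x ^ (n - 1 - j) x̄ ^ j`, which for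
`n = m + 1` is `-2 (m + 1) (m + 2) Q_m(x)`.
-/

open Finset

section NormedAlgebra

variable {𝕜 𝔸 : Type*} [NontriviallyNormedField 𝕜] [NormedRing 𝔸] [NormedAlgebra 𝕜 𝔸]

theorem fderiv_pow_succ_apply (n : ℕ) (x v : 𝔸) :
    fderiv 𝕜 (fun y : 𝔸 => y ^ (n + 1)) x v =
      fderiv 𝕜 (fun y : 𝔸 => y ^ n) x v * x + x ^ n * v := by
  simp_rw [pow_succ]
  rw [fderiv_fun_mul' (differentiableAt_pow n) differentiableAt_fun_id, fderiv_fun_id]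
  simp [add_comm]

theorem fderiv_fderiv_pow_succ_apply (n : ℕ) (x v : 𝔸) :
    fderiv 𝕜 (fun y => fderiv 𝕜 (fun z : 𝔸 => z ^ (n + 1)) y v) x v =
      fderiv 𝕜 (fun y => fderiv 𝕜 (fun z : 𝔸 => z ^ n) y v) x v * x
        + 2 • (fderiv 𝕜 (fun z : 𝔸 => z ^ n) x v * v) := by
  simp_rw [fderiv_pow_succ_apply]
  rw [fderiv_fun_add (by fun_prop) (by fun_prop), fderiv_fun_mul' (by fun_prop) (by fun_prop),
    fderiv_mul_const' (by fun_prop)]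
  simp only [add_apply, smul_apply, fderiv_fun_id, ContinuousLinearMap.id_apply, smul_eq_mul,
    op_smul_eq_mul]
  abel

theorem fderiv_pow_apply (n : ℕ) (x v : 𝔸) :
    fderiv 𝕜 (fun y : 𝔸 => y ^ n) x v = ∑ i ∈ range n, x ^ (n - 1 - i) * v * x ^ i := by
  simp [fderiv_pow_ring']

end NormedAlgebra

theorem self_add_basis_sandwiches_eq_neg_two_smul_star (q : ℍ[ℝ]) :
    q + e1 * q * e1 + e2 * q * e2 + e3 * q * e3 = (-2 : ℝ) • star q := by
  ext <;> simp [Quaternion.re_mul, Quaternion.imI_mul, Quaternion.imJ_mul, Quaternion.imK_mul]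
    <;> simp [e1, e2, e3] <;> ring

theorem sum_fderiv_pow_apply_basis_mul_basis (n : ℕ) (x : ℍ[ℝ]) :
    fderiv ℝ (fun y => y ^ n) x 1 * 1 + fderiv ℝ (fun y => y ^ n) x e1 * e1
      + fderiv ℝ (fun y => y ^ n) x e2 * e2 + fderiv ℝ (fun y => y ^ n) x e3 * e3
      = (-2 : ℝ) • ∑ i ∈ range n, x ^ (n - 1 - i) * star x ^ i := by
  simp only [fderiv_pow_apply, sum_mul, ← sum_add_distrib, smul_sum]
  refine sum_congr rfl fun i _ => ?_
  calc _ = x ^ (n - 1 - i) * (x ^ i + e1 * x ^ i * e1 + e2 * x ^ i * e2 + e3 * x ^ i * e3) := by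
        noncomm_ring
    _ = _ := by rw [self_add_basis_sandwiches_eq_neg_two_smul_star, star_pow, mul_smul_comm]

theorem quatLaplacian_pow_zero (x : ℍ[ℝ]) : quatLaplacian (fun y => y ^ 0) x = 0 := by
  simp [quatLaplacian, dir2]

theorem quatLaplacian_pow_succ (n : ℕ) (x : ℍ[ℝ]) :
    quatLaplacian (fun y => y ^ (n + 1)) x =
      quatLaplacian (fun y => y ^ n) x * x
        - (4 : ℝ) • ∑ i ∈ range n, x ^ (n - 1 - i) * star x ^ i := by
  rw [show (4 : ℝ) • ∑ i ∈ range n, x ^ (n - 1 - i) * star x ^ i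
      = -(2 • (-2 : ℝ) • ∑ i ∈ range n, x ^ (n - 1 - i) * star x ^ i) by module,
    ← sum_fderiv_pow_apply_basis_mul_basis]
  simp only [quatLaplacian, dir2, fderiv_fderiv_pow_succ_apply, add_mul, smul_add]
  abel

theorem quatLaplacian_pow_succ_eq_sum (n : ℕ) (x : ℍ[ℝ]) :
    quatLaplacian (fun y => y ^ (n + 1)) x =
      (-4 : ℝ) • ∑ j ∈ range n, ((n : ℝ) - j) • (x ^ (n - 1 - j) * star x ^ j) := by
  induction n with
  | zero => rw [quatLaplacian_pow_succ, quatLaplacian_pow_zero]; simp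
  | succ n ih =>
    have hshift : ∀ j ∈ range n, x ^ (n - 1 - j) * star x ^ j * x = x ^ (n - j) * star x ^ j := by
      intro j hj
      rw [mul_assoc, ((star_comm_self (x := x)).pow_left j).eq, ← mul_assoc, ← pow_succ,
        show n - 1 - j + 1 = n - j by grind]
    have hsplit : ∑ j ∈ range (n + 1), ((↑(n + 1) : ℝ) - j) • (x ^ (n - j) * star x ^ j)
        = ∑ j ∈ range n, ((n : ℝ) - j) • (x ^ (n - j) * star x ^ j)
          + ∑ j ∈ range (n + 1), x ^ (n - j) * star x ^ j := by
      simp_rw [Nat.cast_succ, add_sub_right_comm _ (1 : ℝ), add_smul, one_smul]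
      rw [sum_add_distrib, sum_range_succ (fun j => ((n : ℝ) - j) • _), sub_self, zero_smul,
        add_zero]
    rw [quatLaplacian_pow_succ, ih]
    simp only [Nat.add_sub_cancel, smul_mul_assoc, sum_mul]
    rw [sum_congr rfl fun j hj => congrArg _ (hshift j hj), hsplit]
    module

/-- For every `m` and every `x ∈ ℍ`, `Q_m(x) = -Δ(x^{m+2})/(2(m+1)(m+2))`. -/
theorem appellQ_eq_neg_laplacian_pow (m : ℕ) (x : ℍ[ℝ]) :
    appellQ m x =
      (-(2 * ((m : ℝ) + 1) * ((m : ℝ) + 2))⁻¹) •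
        quatLaplacian (fun y => y ^ (m + 2)) x := by
  rw [quatLaplacian_pow_succ_eq_sum (m + 1), appellQ, smul_smul, smul_sum]
  refine sum_congr rfl fun j _ => ?_
  rw [smul_smul, Nat.add_sub_cancel, appellT]
  congr 1
  push_cast
  field_simp
  ring
end
end

section
/- For every m ∈ ℕ and every imaginary unit I ∈ ℍ (I² = −1), the function g : ℝ² → ℍ defined by g(u,v) = Q_m(u + vI) satisfies ∂̄_I^{m+1} g = 0, where ∂̄_I g = (1/2)(∂g/∂u + I·∂g/∂v); that is, Q_m is slice polyanalytic of order m+1. -/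
open Quaternion

noncomputable section

/-- The slice Cauchy–Riemann operator
`∂̄_I g = (1/2)(∂g/∂u + I ∂g/∂v)` acting on functions of two real variables. -/
def sliceDBar (I : ℍ[ℝ]) (g : ℝ → ℝ → ℍ[ℝ]) : ℝ → ℝ → ℍ[ℝ] :=
  fun u v => (1 / 2 : ℝ) • (deriv (fun t => g t v) u + I * deriv (fun t => g u t) v)

/-! On the slice `ℂ_I = ℝ + ℝI` the elements `z = u + vI` and `z̄ = u - vI` commute with `I`, and
`∂̄_I z = 0`, `∂̄_I z̄ = 1`; hence `∂̄_I (z^a z̄^b) = b z^a z̄^(b-1)`, exactly as for the Wirtinger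
derivative in `ℂ`. Since `I` is purely imaginary, `Q_m(u + vI)` is a combination of such monomials
with `b ≤ m`, so `m + 1` applications of `∂̄_I` annihilate it. -/

theorem HasDerivAt.fun_pow_of_commute {𝕜 𝔸 : Type*} [NontriviallyNormedField 𝕜] [NormedRing 𝔸]
    [NormedAlgebra 𝕜 𝔸] {f : 𝕜 → 𝔸} {f' : 𝔸} {x : 𝕜} (h : HasDerivAt f f' x)
    (hc : Commute (f x) f') (n : ℕ) :
    HasDerivAt (fun x ↦ f x ^ n) ((n : 𝕜) • (f x ^ (n - 1) * f')) x := by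
  refine (h.fun_pow' n).congr_deriv ?_
  have hterm : ∀ i ∈ Finset.range n, f x ^ (n.pred - i) * f' * f x ^ i = f x ^ (n - 1) * f' := by
    intro i hi
    rw [mul_assoc, ← (hc.pow_left i).eq, ← mul_assoc, ← pow_add, Nat.pred_eq_sub_one,
      Nat.sub_add_cancel (Nat.le_sub_one_of_lt (Finset.mem_range.mp hi))]
  rw [Finset.sum_congr rfl hterm, Finset.sum_const, Finset.card_range, Nat.cast_smul_eq_nsmul]

theorem Quaternion.re_eq_zero_of_sq_eq_neg_one {I : ℍ[ℝ]} (hI : I ^ 2 = -1) : I.re = 0 := by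
  rw [sq] at hI
  have h1 := congrArg QuaternionAlgebra.re hI
  have h2 := congrArg QuaternionAlgebra.imI hI
  have h3 := congrArg QuaternionAlgebra.imJ hI
  have h4 := congrArg QuaternionAlgebra.imK hI
  simp at h1 h2 h3 h4
  nlinarith [sq_nonneg I.re, sq_nonneg I.imI, sq_nonneg I.imJ, sq_nonneg I.imK]

theorem hasDerivAt_quaternion_coe (s : ℝ) : HasDerivAt (fun t : ℝ => (t : ℍ[ℝ])) 1 s := by
  simpa [← Quaternion.algebraMap_def, Algebra.algebraMap_eq_smul_one] using
    (hasDerivAt_id s).smul_const (1 : ℍ[ℝ])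

theorem Commute.mul_mul_eq_neg_of_sq_eq_neg_one {I X : ℍ[ℝ]} (hI : I ^ 2 = -1) (hX : Commute X I) :
    I * (X * I) = -X := by
  rw [← mul_assoc, ← hX.eq, mul_assoc, ← sq, hI, mul_neg_one]

section SliceMonomial

variable {I : ℍ[ℝ]}

def sliceMonomial (I : ℍ[ℝ]) (a b : ℕ) (u v : ℝ) : ℍ[ℝ] :=
  ((u : ℍ[ℝ]) + v • I) ^ a * ((u : ℍ[ℝ]) - v • I) ^ b

theorem commute_coe_add_smul (u v : ℝ) : Commute ((u : ℍ[ℝ]) + v • I) I :=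
  (Quaternion.coe_commute u I).add_left ((Commute.refl I).smul_left v)

theorem commute_coe_sub_smul (u v : ℝ) : Commute ((u : ℍ[ℝ]) - v • I) I :=
  (Quaternion.coe_commute u I).sub_left ((Commute.refl I).smul_left v)

theorem commute_sliceMonomial (a b : ℕ) (u v : ℝ) : Commute (sliceMonomial I a b u v) I :=
  ((commute_coe_add_smul u v).pow_left a).mul_left ((commute_coe_sub_smul u v).pow_left b)

theorem hasDerivAt_sliceMonomial_fst (a b : ℕ) (u v : ℝ) :
    HasDerivAt (fun t => sliceMonomial I a b t v)
      ((a : ℝ) • sliceMonomial I (a - 1) b u v + (b : ℝ) • sliceMonomial I a (b - 1) u v) u := by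
  have hz := ((hasDerivAt_quaternion_coe u).add_const (v • I)).fun_pow_of_commute
    (Commute.one_right _) a
  have hw := ((hasDerivAt_quaternion_coe u).sub_const (v • I)).fun_pow_of_commute
    (Commute.one_right _) b
  refine (hz.fun_mul hw).congr_deriv ?_
  simp only [sliceMonomial, mul_one, smul_mul_assoc, mul_smul_comm]

theorem hasDerivAt_sliceMonomial_snd (a b : ℕ) (u v : ℝ) :
    HasDerivAt (fun t => sliceMonomial I a b u t)
      (((a : ℝ) • sliceMonomial I (a - 1) b u v - (b : ℝ) • sliceMonomial I a (b - 1) u v) * I)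
      v := by
  have hI : HasDerivAt (fun t : ℝ => t • I) I v := by simpa using (hasDerivAt_id v).smul_const I
  have hz := (hI.const_add (u : ℍ[ℝ])).fun_pow_of_commute (commute_coe_add_smul u v) a
  have hw := (hI.const_sub (u : ℍ[ℝ])).fun_pow_of_commute (commute_coe_sub_smul u v).neg_right b
  refine (hz.fun_mul hw).congr_deriv ?_
  simp only [sliceMonomial, smul_mul_assoc, mul_smul_comm, sub_mul, mul_neg, smul_neg, mul_assoc,
    ((commute_coe_sub_smul u v).pow_left b).symm.eq]
  abel

theorem sliceDBar_sum_smul_sliceMonomial (hI : I ^ 2 = -1) {ι : Type*} (s : Finset ι)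
    (c : ι → ℝ) (a b : ι → ℕ) :
    sliceDBar I (fun u v => ∑ j ∈ s, c j • sliceMonomial I (a j) (b j) u v) =
      fun u v => ∑ j ∈ s, (c j * b j) • sliceMonomial I (a j) (b j - 1) u v := by
  funext u v
  have hu := HasDerivAt.fun_sum fun j (_ : j ∈ s) =>
    (hasDerivAt_sliceMonomial_fst (I := I) (a j) (b j) u v).fun_const_smul (c j)
  have hv := HasDerivAt.fun_sum fun j (_ : j ∈ s) =>
    (hasDerivAt_sliceMonomial_snd (I := I) (a j) (b j) u v).fun_const_smul (c j)
  rw [sliceDBar, hu.deriv, hv.deriv, Finset.mul_sum, ← Finset.sum_add_distrib, Finset.smul_sum]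
  refine Finset.sum_congr rfl fun j _ => ?_
  have hcomm := ((commute_sliceMonomial (I := I) (a j - 1) (b j) u v).smul_left (a j : ℝ)).sub_left
    ((commute_sliceMonomial (I := I) (a j) (b j - 1) u v).smul_left (b j : ℝ))
  rw [mul_smul_comm, hcomm.mul_mul_eq_neg_of_sq_eq_neg_one hI]
  module

theorem iterate_sliceDBar_sum_smul_sliceMonomial (hI : I ^ 2 = -1) {ι : Type*} (s : Finset ι)
    (c : ι → ℝ) (a b : ι → ℕ) (k : ℕ) :
    (sliceDBar I)^[k] (fun u v => ∑ j ∈ s, c j • sliceMonomial I (a j) (b j) u v) =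
      fun u v => ∑ j ∈ s, (c j * (b j).descFactorial k) • sliceMonomial I (a j) (b j - k) u v := by
  induction k with
  | zero => simp
  | succ k ih =>
    rw [Function.iterate_succ_apply', ih, sliceDBar_sum_smul_sliceMonomial hI]
    funext u v
    refine Finset.sum_congr rfl fun j _ => ?_
    rw [Nat.sub_sub, Nat.descFactorial_succ, Nat.cast_mul, mul_assoc, mul_comm ((b j - k : ℕ) : ℝ)]

theorem star_coe_add_smul (hI : I ^ 2 = -1) (u v : ℝ) :
    star ((u : ℍ[ℝ]) + v • I) = u - v • I := by
  rw [star_add, Quaternion.star_coe, Quaternion.star_smul, Quaternion.star_eq_neg.mpr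
    (Quaternion.re_eq_zero_of_sq_eq_neg_one hI), smul_neg, sub_eq_add_neg]

theorem appellQ_coe_add_smul (hI : I ^ 2 = -1) (m : ℕ) (u v : ℝ) :
    appellQ m ((u : ℍ[ℝ]) + v • I) =
      ∑ j ∈ Finset.range (m + 1), appellT m j • sliceMonomial I (m - j) j u v := by
  simp only [appellQ, star_coe_add_smul hI, sliceMonomial]

end SliceMonomial

/-- `Q_m` is slice polyanalytic of order `m+1`: for every imaginary unit `I`
(`I² = -1`), the function `g(u,v) = Q_m(u + vI)` is annihilated by the
`(m+1)`-fold iterate of `∂̄_I`. -/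
theorem appellQ_slice_polyanalytic (m : ℕ) (I : ℍ[ℝ]) (hI : I ^ 2 = -1) (u v : ℝ) :
    (sliceDBar I)^[m + 1] (fun u v => appellQ m ((u : ℍ[ℝ]) + v • I)) u v = 0 := by
  simp only [appellQ_coe_add_smul hI, iterate_sliceDBar_sum_smul_sliceMonomial hI]
  refine Finset.sum_eq_zero fun j hj => ?_
  rw [Nat.descFactorial_eq_zero_iff_lt.mpr (Finset.mem_range.mp hj), Nat.cast_zero, mul_zero,
    zero_smul]
end
end

section
/- Let Ω ⊆ ℍ be an axially symmetric open set and let f : Ω → ℍ be Fueter hyperholomorphic (Df = 0 on Ω) and of axial type. Then for every x ∈ Ω with im(x) ≠ 0, writing u = re(x), v = |im(x)| and I_x = im(x)/|im(x)|, and for every J ∈ 𝕊, the Representation Formula holds: f(u + I_x v) = (1/2)[f(u + Jv) + f(u − Jv)] + (I_x·J/2)[f(u − Jv) − f(u + Jv)]. -/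
/-!
The formula is algebra once `f` is in axial form: by axial symmetry `u ± Jv` lie in `Ω`, and
`f(u ± Jv) = A(u,v) ± J B(u,v)`. Half the sum of these values is `A(u,v)`, half of
`f(u - Jv) - f(u + Jv)` is `-J B(u,v)`, and since `J² = -1`, left multiplication by `I_x J` turns
the latter into `I_x B(u,v)`; the total is `A(u,v) + I_x B(u,v) = f(x)`.
-/

open Quaternion

noncomputable section

def IsAxialTypeOn (Ω : Set ℍ[ℝ]) (f : ℍ[ℝ] → ℍ[ℝ]) (A B : ℝ → ℝ → ℍ[ℝ]) : Prop :=
  ∀ x ∈ Ω, x.im ≠ 0 → f x = A x.re ‖x.im‖ + (‖x.im‖⁻¹ • x.im) * B x.re ‖x.im‖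

namespace Quaternion

variable {J : ℍ[ℝ]}

lemma norm_eq_one_of_sq_eq_neg_one (hJ : J ^ 2 = -1) : ‖J‖ = 1 := by
  have : ‖J‖ ^ 2 = 1 := by rw [← norm_pow, hJ, norm_neg, norm_one]
  nlinarith [norm_nonneg J]

lemma re_eq_zero_of_sq_eq_neg_one_s7 (hJ : J ^ 2 = -1) : J.re = 0 := by
  refine sq_eq_neg_normSq.mp ?_
  rw [normSq_eq_norm_mul_self, norm_eq_one_of_sq_eq_neg_one hJ, mul_one, coe_one, hJ]

lemma sq_eq_neg_one_of_re_eq_zero (hre : J.re = 0) (hJ : ‖J‖ = 1) : J ^ 2 = -1 := by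
  rw [sq_eq_neg_normSq.mpr hre, normSq_eq_norm_mul_self, hJ, mul_one, coe_one]

lemma im_eq_self_of_re_eq_zero (hre : J.re = 0) : J.im = J := by
  simpa [hre] using re_add_im J

lemma sq_inv_norm_im_smul_im {x : ℍ[ℝ]} (hx : x.im ≠ 0) : (‖x.im‖⁻¹ • x.im) ^ 2 = -1 :=
  sq_eq_neg_one_of_re_eq_zero (by rw [re_smul, re_im, smul_zero]) (norm_smul_inv_norm hx)

lemma coe_re_add_norm_im_smul {x : ℍ[ℝ]} (hx : x.im ≠ 0) :
    (x.re : ℍ[ℝ]) + ‖x.im‖ • (‖x.im‖⁻¹ • x.im) = x := by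
  rw [smul_inv_smul₀ (norm_ne_zero_iff.mpr hx), re_add_im]

lemma re_coe_add_smul (hre : J.re = 0) (u v : ℝ) : ((u : ℍ[ℝ]) + v • J).re = u := by
  simp [hre]

lemma im_coe_add_smul (hre : J.re = 0) (u v : ℝ) : ((u : ℍ[ℝ]) + v • J).im = v • J := by
  rw [im_add, im_coe, im_smul, im_eq_self_of_re_eq_zero hre, zero_add]

end Quaternion

theorem IsAxialTypeOn.apply_coe_add_smul {Ω : Set ℍ[ℝ]} {f : ℍ[ℝ] → ℍ[ℝ]} {A B : ℝ → ℝ → ℍ[ℝ]}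
    (hf : IsAxialTypeOn Ω f A B) {u v : ℝ} (hv : 0 < v) {J : ℍ[ℝ]} (hJ : J ^ 2 = -1)
    (hmem : (u : ℍ[ℝ]) + v • J ∈ Ω) : f (u + v • J) = A u v + J * B u v := by
  have hre := re_eq_zero_of_sq_eq_neg_one_s7 hJ
  have hnorm : ‖((u : ℍ[ℝ]) + v • J).im‖ = v := by
    rw [im_coe_add_smul hre, norm_smul, norm_eq_one_of_sq_eq_neg_one hJ, mul_one,
      Real.norm_of_nonneg hv.le]
  have him : ((u : ℍ[ℝ]) + v • J).im ≠ 0 := by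
    rw [← norm_ne_zero_iff, hnorm]
    exact hv.ne'
  rw [hf _ hmem him, re_coe_add_smul hre, hnorm, im_coe_add_smul hre, inv_smul_smul₀ hv.ne']

lemma add_mul_eq_of_mul_self_eq_neg_one {R : Type*} [Ring R] [Algebra ℝ R] (a b i j : R)
    (hj : j * j = -1) :
    a + i * b = (1 / 2 : ℝ) • ((a + j * b) + (a - j * b))
      + (1 / 2 : ℝ) • (i * j * ((a - j * b) - (a + j * b))) := by
  have hsum : (a + j * b) + (a - j * b) = (2 : ℝ) • a := by module
  have hdiff : i * j * ((a - j * b) - (a + j * b)) = (2 : ℝ) • (i * b) := by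
    rw [show (a - j * b) - (a + j * b) = (-2 : ℝ) • (j * b) by module, mul_smul_comm,
      show i * j * (j * b) = i * (j * j) * b by noncomm_ring, hj, mul_neg_one, neg_mul, smul_neg,
      neg_smul, neg_neg]
  rw [hsum, hdiff, smul_smul, smul_smul]
  norm_num

theorem representation_formula_axial_general
    (Ω : Set ℍ[ℝ])
    (hsym : ∀ (u v : ℝ) (I J : ℍ[ℝ]), I ^ 2 = -1 → J ^ 2 = -1 →
      ((u : ℍ[ℝ]) + v • I) ∈ Ω → ((u : ℍ[ℝ]) + v • J) ∈ Ω)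
    (f : ℍ[ℝ] → ℍ[ℝ])
    (A B : ℝ → ℝ → ℍ[ℝ])
    (hax : ∀ x ∈ Ω, x.im ≠ 0 →
      f x = A x.re ‖x.im‖ + (‖x.im‖⁻¹ • x.im) * B x.re ‖x.im‖)
    (x : ℍ[ℝ]) (hx : x ∈ Ω) (hxim : x.im ≠ 0)
    (J : ℍ[ℝ]) (hJ : J ^ 2 = -1) :
    f x =
      (1 / 2 : ℝ) • (f ((x.re : ℍ[ℝ]) + ‖x.im‖ • J) + f ((x.re : ℍ[ℝ]) - ‖x.im‖ • J))
        + (1 / 2 : ℝ) • ((‖x.im‖⁻¹ • x.im) * J *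
            (f ((x.re : ℍ[ℝ]) - ‖x.im‖ • J) - f ((x.re : ℍ[ℝ]) + ‖x.im‖ • J))) := by
  have hI := sq_inv_norm_im_smul_im hxim
  have hv : 0 < ‖x.im‖ := norm_pos_iff.mpr hxim
  have hx' : (x.re : ℍ[ℝ]) + ‖x.im‖ • (‖x.im‖⁻¹ • x.im) ∈ Ω := by
    rwa [coe_re_add_norm_im_smul hxim]
  have hnegJ : (-J) ^ 2 = -1 := by rw [neg_sq, hJ]
  have hplus := IsAxialTypeOn.apply_coe_add_smul hax hv hJ (hsym _ _ _ _ hI hJ hx')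
  have hminus := IsAxialTypeOn.apply_coe_add_smul hax hv hnegJ (hsym _ _ _ _ hI hnegJ hx')
  rw [smul_neg, ← sub_eq_add_neg, neg_mul, ← sub_eq_add_neg] at hminus
  rw [hax x hx hxim, hplus, hminus]
  exact add_mul_eq_of_mul_self_eq_neg_one _ _ _ _ (by rw [← sq, hJ])

/-- Representation Formula for Fueter hyperholomorphic functions of axial type on an
axially symmetric open set: with `u = re x`, `v = |im x|`, `I_x = im x / |im x|`,
and any imaginary unit `J`,
`f(u + I_x v) = (1/2)[f(u+Jv) + f(u-Jv)] + (I_x J/2)[f(u-Jv) - f(u+Jv)]`. -/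
theorem representation_formula_axial
    (Ω : Set ℍ[ℝ]) (hΩ : IsOpen Ω)
    (hsym : ∀ (u v : ℝ) (I J : ℍ[ℝ]), I ^ 2 = -1 → J ^ 2 = -1 →
      ((u : ℍ[ℝ]) + v • I) ∈ Ω → ((u : ℍ[ℝ]) + v • J) ∈ Ω)
    (f : ℍ[ℝ] → ℍ[ℝ])
    (hdiff : ∀ x ∈ Ω, DifferentiableAt ℝ f x)
    (hD : ∀ x ∈ Ω, fueterD f x = 0)
    (A B : ℝ → ℝ → ℍ[ℝ])
    (hax : ∀ x ∈ Ω, x.im ≠ 0 →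
      f x = A x.re ‖x.im‖ + (‖x.im‖⁻¹ • x.im) * B x.re ‖x.im‖)
    (x : ℍ[ℝ]) (hx : x ∈ Ω) (hxim : x.im ≠ 0)
    (J : ℍ[ℝ]) (hJ : J ^ 2 = -1) :
    f x =
      (1 / 2 : ℝ) • (f ((x.re : ℍ[ℝ]) + ‖x.im‖ • J) + f ((x.re : ℍ[ℝ]) - ‖x.im‖ • J))
        + (1 / 2 : ℝ) • ((‖x.im‖⁻¹ • x.im) * J *
            (f ((x.re : ℍ[ℝ]) - ‖x.im‖ • J) - f ((x.re : ℍ[ℝ]) + ‖x.im‖ • J))) :=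
  representation_formula_axial_general Ω hsym f A B hax x hx hxim J hJ
end
end

section
/- Let r, t ∈ ℕ and let s_n ∈ ℂ^{r×t} (n ∈ ℕ) be such that for every z ∈ 𝔻 the series S(z) = Σ_{n=0}^∞ s_n·zⁿ converges. Then I_r − S(z)·S(z)ᴴ is positive semidefinite for every z ∈ 𝔻 if and only if for every finitely supported g : ℕ → ℂ^t one has Σ_{n=0}^∞ ‖Σ_{k=0}^n s_{n−k}·g_k‖² ≤ Σ_{k=0}^∞ ‖g_k‖²; that is, if and only if the lower triangular block Toeplitz operator T_s = (s_{j−k})_{j≥k} is a contraction from ℓ²(ℕ, ℂ^t) into ℓ²(ℕ, ℂ^r). -/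
open Matrix
open scoped ComplexOrder

noncomputable section

/-- Squared Euclidean norm of a complex vector. -/
def sqnormC {r : ℕ} (v : Fin r → ℂ) : ℝ := ∑ a, ‖v a‖ ^ 2

/-!
Write `S(z) = ∑ zⁿ aₙ` and `(T g)ₙ = ∑_{k ≤ n} a_{n-k} gₖ`, so that `∑ zᵐ (T g)ₘ = S(z) (∑ zᵏ gₖ)`
whenever `S` is a polynomial and `g` is finitely supported.

If `‖S(z)‖ ≤ 1` on the disk, fix `ρ < 1` and truncate `S` to a polynomial `S_P` with
`‖S_P‖ ≤ 1 + ε_P` on `|z| = ρ`. Evaluating the product identity at the `N`-th roots of unity scaled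
by `ρ`, the discrete Parseval identity gives `∑ ρ^{2m} ‖(T g)ₘ‖² ≤ (1 + ε_P)² ∑ ρ^{2k} ‖gₖ‖²`;
let `P → ∞`, then `ρ → 1`.

Conversely, if every finite section of `T` is a contraction, pair `T` applied to `gₖ = z̄ᵏ v` with
`yₙ = z̄ⁿ x`. By Cauchy–Schwarz, `‖∑_{k<N} |z|^{2k} ⟪x, S_{N-k}(z) v⟫‖ ≤ ∑_{k<N} |z|^{2k} ‖x‖ ‖v‖`,
where `S_J` are the partial sums of `S`; as `N → ∞` this becomes `‖⟪x, S(z) v⟫‖ ≤ ‖x‖ ‖v‖`.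

For matrices, `I - A Aᴴ ⪰ 0 ↔ ‖A‖ ≤ 1` in the `ℓ²` operator norm, by the C⋆-identity.
-/

open Finset Filter Topology ComplexConjugate
open scoped InnerProductSpace

section Series

variable {𝕜 X : Type*} [NormedField 𝕜] [NormedAddCommGroup X] [NormedSpace 𝕜 X]

lemma summable_pow_mul_norm_of_summable_pow_smul {x : ℕ → X} {w : 𝕜} {ρ : ℝ} (hρ : 0 ≤ ρ)
    (hw : ρ < ‖w‖) (h : Summable fun n => w ^ n • x n) : Summable fun n => ρ ^ n * ‖x n‖ := by
  obtain ⟨C, hC⟩ := h.tendsto_atTop_zero.norm.bddAbove_range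
  have hw0 : 0 < ‖w‖ := hρ.trans_lt hw
  refine .of_nonneg_of_le (fun n => by positivity) (fun n => ?_)
    ((summable_geometric_of_lt_one (by positivity) ((div_lt_one hw0).2 hw)).mul_left C)
  calc ρ ^ n * ‖x n‖ = (ρ / ‖w‖) ^ n * ‖w ^ n • x n‖ := by
        rw [norm_smul, norm_pow, ← mul_assoc, ← mul_pow, div_mul_cancel₀ _ hw0.ne']
    _ ≤ (ρ / ‖w‖) ^ n * C := by gcongr; exact hC ⟨n, rfl⟩
    _ = C * (ρ / ‖w‖) ^ n := mul_comm _ _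

lemma norm_tsum_sub_sum_range_le {x : ℕ → X} {z : 𝕜} {ρ : ℝ} (hz : ‖z‖ ≤ ρ)
    (hs : Summable fun n => z ^ n • x n) (habs : Summable fun n => ρ ^ n * ‖x n‖) (P : ℕ) :
    ‖∑' n, z ^ n • x n - ∑ n ∈ range P, z ^ n • x n‖ ≤ ∑' n, ρ ^ (n + P) * ‖x (n + P)‖ := by
  rw [← hs.sum_add_tsum_nat_add P, add_sub_cancel_left]
  refine tsum_of_norm_bounded ((summable_nat_add_iff P).2 habs).hasSum fun n => ?_
  rw [norm_smul, norm_pow]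
  gcongr

end Series

lemma tendsto_sum_range_geometric_smul {G : Type*} [NormedAddCommGroup G] [NormedSpace ℝ G]
    [CompleteSpace G] {q : ℝ} (hq0 : 0 ≤ q) (hq1 : q < 1) {u : ℕ → G} {L : G}
    (hu : Tendsto u atTop (𝓝 L)) :
    Tendsto (fun N => ∑ k ∈ range N, q ^ k • u (N - k)) atTop (𝓝 ((1 - q)⁻¹ • L)) := by
  obtain ⟨C, hC⟩ := hu.norm.bddAbove_range
  have hsum : ∀ N, ∑ k ∈ range N, q ^ k • u (N - k) =
      ∑' k, if k < N then q ^ k • u (N - k) else 0 := fun N => by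
    rw [tsum_eq_sum (s := range N) fun k hk => if_neg (by simpa using hk)]
    exact sum_congr rfl fun k hk => (if_pos (mem_range.1 hk)).symm
  simp_rw [hsum, ← tsum_geometric_of_lt_one hq0 hq1,
    ← (summable_geometric_of_lt_one hq0 hq1).tsum_smul_const]
  refine tendsto_tsum_of_dominated_convergence (bound := fun k => q ^ k * C)
    ((summable_geometric_of_lt_one hq0 hq1).mul_right C) (fun k => ?_) (.of_forall fun N k => ?_)
  · refine ((hu.comp (tendsto_sub_atTop_nat k)).const_smul (q ^ k)).congr' ?_
    filter_upwards [eventually_gt_atTop k] with N hN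
    simp [hN]
  · split_ifs
    · rw [norm_smul, Real.norm_of_nonneg (by positivity)]
      gcongr
      exact hC ⟨_, rfl⟩
    · simpa using mul_nonneg (pow_nonneg hq0 k) ((norm_nonneg _).trans (hC ⟨0, rfl⟩))

lemma norm_sum_inner_sq_le {𝕜 G ι : Type*} [RCLike 𝕜] [NormedAddCommGroup G]
    [InnerProductSpace 𝕜 G] (s : Finset ι) (x y : ι → G) :
    ‖∑ i ∈ s, ⟪x i, y i⟫_𝕜‖ ^ 2 ≤ (∑ i ∈ s, ‖x i‖ ^ 2) * ∑ i ∈ s, ‖y i‖ ^ 2 :=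
  calc _ ≤ (∑ i ∈ s, ‖x i‖ * ‖y i‖) ^ 2 := by
        gcongr
        exact (norm_sum_le _ _).trans (sum_le_sum fun i _ => norm_inner_le_norm _ _)
    _ ≤ _ := sum_mul_sq_le_sq_mul_sq s _ _

lemma sum_norm_sq_conj_pow_smul {G : Type*} [NormedAddCommGroup G] [NormedSpace ℂ G] (z : ℂ)
    (w : G) (N : ℕ) :
    ∑ n ∈ range N, ‖conj z ^ n • w‖ ^ 2 = (∑ n ∈ range N, (‖z‖ ^ 2) ^ n) * ‖w‖ ^ 2 := by
  rw [sum_mul]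
  refine sum_congr rfl fun n _ => ?_
  rw [norm_smul, norm_pow, Complex.norm_conj]
  ring

lemma IsPrimitiveRoot.sum_conj_pow_mul_pow {ω : ℂ} {N : ℕ} (hω : IsPrimitiveRoot ω N)
    {m m' : ℕ} (hm : m < N) (hm' : m' < N) :
    ∑ j ∈ range N, conj (ω ^ j) ^ m * (ω ^ j) ^ m' = if m = m' then (N : ℂ) else 0 := by
  have hω0 : ω ≠ 0 := hω.ne_zero (by omega)
  have hconj : conj ω = ω⁻¹ := (Complex.inv_eq_conj (hω.norm'_eq_one (by omega))).symm
  set c := ω ^ m' / ω ^ m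
  have hterm : ∀ j, conj (ω ^ j) ^ m * (ω ^ j) ^ m' = c ^ j := fun j => by
    rw [map_pow, hconj, div_pow, div_eq_mul_inv, ← pow_mul, ← pow_mul, inv_pow, ← pow_mul,
      ← pow_mul, mul_comm, mul_comm j m, mul_comm j m']
  simp_rw [hterm]
  split_ifs with h
  · simp [c, h, hω0]
  · have hc : c ≠ 1 := fun hc =>
      h (hω.pow_inj hm hm' ((div_eq_one_iff_eq (pow_ne_zero _ hω0)).1 hc).symm)
    rw [geom_sum_eq hc, div_pow, ← pow_mul, ← pow_mul, mul_comm m', mul_comm m, pow_mul, pow_mul,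
      hω.pow_eq_one, one_pow, one_pow, div_one, sub_self, zero_div]

lemma sum_norm_sq_sum_pow_smul {E : Type*} [NormedAddCommGroup E] [InnerProductSpace ℂ E]
    {ω : ℂ} {N : ℕ} (hω : IsPrimitiveRoot ω N) (ρ : ℝ) (b : ℕ → E) :
    ∑ j ∈ range N, ‖∑ m ∈ range N, ((ρ : ℂ) * ω ^ j) ^ m • b m‖ ^ 2 =
      N * ∑ m ∈ range N, ρ ^ (2 * m) * ‖b m‖ ^ 2 := by
  have horth : ∀ m ∈ range N, ∀ m' ∈ range N,
      ∑ j ∈ range N, conj (((ρ : ℂ) * ω ^ j) ^ m) * (((ρ : ℂ) * ω ^ j) ^ m' * ⟪b m, b m'⟫_ℂ) =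
        if m = m' then N * ((ρ : ℂ) ^ (2 * m) * ⟪b m, b m⟫_ℂ) else 0 := fun m hm m' hm' => by
    have hterm : ∀ j, conj (((ρ : ℂ) * ω ^ j) ^ m) * (((ρ : ℂ) * ω ^ j) ^ m' * ⟪b m, b m'⟫_ℂ) =
        ((ρ : ℂ) ^ m * (ρ : ℂ) ^ m' * ⟪b m, b m'⟫_ℂ) * (conj (ω ^ j) ^ m * (ω ^ j) ^ m') :=
      fun j => by simp only [map_pow, map_mul, Complex.conj_ofReal]; ring
    rw [sum_congr rfl fun j _ => hterm j, ← mul_sum,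
      hω.sum_conj_pow_mul_pow (mem_range.1 hm) (mem_range.1 hm')]
    split_ifs with h
    · subst h; ring
    · rw [mul_zero]
  have hnorm : ∀ v : E, ((‖v‖ ^ 2 : ℝ) : ℂ) = ⟪v, v⟫_ℂ := fun v => by
    rw [inner_self_eq_norm_sq_to_K]; push_cast; rfl
  apply Complex.ofReal_injective
  push_cast [hnorm]
  simp_rw [sum_inner, inner_sum, inner_smul_left, inner_smul_right]
  rw [sum_comm, mul_sum]
  refine sum_congr rfl fun m hm => ?_
  rw [sum_comm, sum_congr rfl fun m' hm' => horth m hm m' hm', sum_ite_eq, if_pos hm]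

section Toeplitz

variable {E F : Type*} [NormedAddCommGroup E] [NormedSpace ℂ E] [NormedAddCommGroup F]
  [NormedSpace ℂ F]

def toeplitzMul (a : ℕ → E →L[ℂ] F) (g : ℕ → E) (n : ℕ) : F :=
  ∑ k ∈ range (n + 1), a (n - k) (g k)

def IsToeplitzContraction (a : ℕ → E →L[ℂ] F) : Prop :=
  ∀ (g : ℕ → E) (N : ℕ), ∑ n ∈ range N, ‖toeplitzMul a g n‖ ^ 2 ≤ ∑ k ∈ range N, ‖g k‖ ^ 2

lemma toeplitzMul_congr {a a' : ℕ → E →L[ℂ] F} {g g' : ℕ → E} {n : ℕ}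
    (ha : ∀ k ≤ n, a k = a' k) (hg : ∀ k ≤ n, g k = g' k) :
    toeplitzMul a g n = toeplitzMul a' g' n :=
  sum_congr rfl fun k hk => by rw [ha _ (n.sub_le k), hg k (mem_range_succ_iff.1 hk)]

lemma sum_pow_smul_toeplitzMul (a : ℕ → E →L[ℂ] F) (g : ℕ → E) (z : ℂ) (N : ℕ) :
    ∑ m ∈ range N, z ^ m • toeplitzMul a g m =
      ∑ k ∈ range N, z ^ k • (∑ n ∈ range (N - k), z ^ n • a n) (g k) := by
  have h := sum_range_diag_flip N fun k n => z ^ (k + n) • a n (g k)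
  simp only [_root_.sum_apply, _root_.smul_apply, smul_sum, smul_smul, ← pow_add] at h ⊢
  rw [← h]
  refine sum_congr rfl fun m _ => ?_
  rw [toeplitzMul, smul_sum]
  refine sum_congr rfl fun k hk => ?_
  rw [Nat.add_sub_cancel' (mem_range_succ_iff.1 hk)]

lemma sum_pow_smul_toeplitzMul_eq_apply {a : ℕ → E →L[ℂ] F} {g : ℕ → E} {P B N : ℕ}
    (ha : ∀ n ≥ P, a n = 0) (hg : ∀ k ≥ B, g k = 0) (hN : P + B ≤ N) (z : ℂ) :
    ∑ m ∈ range N, z ^ m • toeplitzMul a g m =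
      (∑ n ∈ range P, z ^ n • a n) (∑ k ∈ range N, z ^ k • g k) := by
  have hpoly : ∀ L ≥ P, ∑ n ∈ range L, z ^ n • a n = ∑ n ∈ range P, z ^ n • a n := fun L hL =>
    eventually_constant_sum (fun n hn => by rw [ha n hn, smul_zero]) hL
  rw [sum_pow_smul_toeplitzMul, map_sum]
  refine sum_congr rfl fun k _ => ?_
  rw [map_smul]
  rcases lt_or_ge k B with hkB | hkB
  · rw [hpoly _ (by omega)]
  · simp [hg k hkB]

lemma isToeplitzContraction_iff_finsupp {a : ℕ → E →L[ℂ] F} :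
    IsToeplitzContraction a ↔ ∀ (g : ℕ →₀ E) (M : ℕ),
      ∑ n ∈ range M, ‖toeplitzMul a g n‖ ^ 2 ≤ ∑ k ∈ g.support, ‖g k‖ ^ 2 := by
  classical
  constructor
  · intro h g M
    obtain ⟨B, hB⟩ := g.support.exists_nat_subset_range
    calc ∑ n ∈ range M, ‖toeplitzMul a g n‖ ^ 2
        ≤ ∑ n ∈ range (M + B), ‖toeplitzMul a g n‖ ^ 2 :=
          sum_le_sum_of_subset_of_nonneg (range_subset_range.2 le_self_add)
            fun _ _ _ => by positivity
      _ ≤ ∑ k ∈ range (M + B), ‖g k‖ ^ 2 := h g (M + B)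
      _ = ∑ k ∈ g.support, ‖g k‖ ^ 2 := (sum_subset (hB.trans (range_subset_range.2 le_add_self))
          fun k _ hk => by rw [Finsupp.notMem_support_iff.1 hk, norm_zero, sq, zero_mul]).symm
  · intro h g N
    let g' : ℕ →₀ E := Finsupp.onFinset (range N) (fun k => if k < N then g k else 0)
      fun k hk => by
        by_contra hkN
        exact hk (if_neg (by simpa using hkN))
    have hg' : ∀ k < N, g' k = g k := fun k hk => if_pos hk
    calc ∑ n ∈ range N, ‖toeplitzMul a g n‖ ^ 2 = ∑ n ∈ range N, ‖toeplitzMul a g' n‖ ^ 2 :=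
          sum_congr rfl fun n hn => by
            rw [toeplitzMul_congr (fun _ _ => rfl) fun k hk => (hg' k (by simp at hn; omega)).symm]
      _ ≤ ∑ k ∈ g'.support, ‖g' k‖ ^ 2 := h g' N
      _ ≤ ∑ k ∈ range N, ‖g' k‖ ^ 2 :=
          sum_le_sum_of_subset_of_nonneg Finsupp.support_onFinset_subset fun _ _ _ => by positivity
      _ = ∑ k ∈ range N, ‖g k‖ ^ 2 := sum_congr rfl fun k hk => by rw [hg' k (mem_range.1 hk)]

end Toeplitz

section InnerProduct

variable {E F : Type*} [NormedAddCommGroup E] [InnerProductSpace ℂ E]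
  [NormedAddCommGroup F] [InnerProductSpace ℂ F]

lemma sum_pow_mul_norm_sq_toeplitzMul_le {a : ℕ → E →L[ℂ] F} {g : ℕ → E} {P B : ℕ} {ρ C : ℝ}
    (ha : ∀ n ≥ P, a n = 0) (hg : ∀ k ≥ B, g k = 0)
    (hC : ∀ z : ℂ, ‖z‖ = ρ → ‖∑ n ∈ range P, z ^ n • a n‖ ≤ C) (hρ : 0 ≤ ρ) :
    ∑ m ∈ range (P + B), ρ ^ (2 * m) * ‖toeplitzMul a g m‖ ^ 2 ≤
      C ^ 2 * ∑ k ∈ range B, ρ ^ (2 * k) * ‖g k‖ ^ 2 := by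
  set N := P + B
  rcases Nat.eq_zero_or_pos N with hN | hN
  · simp [N, show P = 0 by omega, show B = 0 by omega]
  have hω := Complex.isPrimitiveRoot_exp N hN.ne'
  set ω := Complex.exp (2 * Real.pi * Complex.I / N)
  have hz : ∀ j, ‖(ρ : ℂ) * ω ^ j‖ = ρ := fun j => by
    simp [norm_pow, hω.norm'_eq_one hN.ne', abs_of_nonneg hρ]
  have hpt : ∀ j, ‖∑ m ∈ range N, ((ρ : ℂ) * ω ^ j) ^ m • toeplitzMul a g m‖ ^ 2 ≤
      C ^ 2 * ‖∑ k ∈ range N, ((ρ : ℂ) * ω ^ j) ^ k • g k‖ ^ 2 := fun j => by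
    rw [sum_pow_smul_toeplitzMul_eq_apply ha hg le_rfl, ← mul_pow]
    gcongr
    exact (ContinuousLinearMap.le_opNorm _ _).trans (by gcongr; exact hC _ (hz j))
  have hsum := sum_le_sum fun j (_ : j ∈ range N) => hpt j
  rw [← mul_sum, sum_norm_sq_sum_pow_smul hω, sum_norm_sq_sum_pow_smul hω, mul_left_comm,
    eventually_constant_sum (u := fun k => ρ ^ (2 * k) * ‖g k‖ ^ 2)
      (fun k hk => by simp [hg k hk]) (le_add_self : B ≤ N)] at hsum
  exact le_of_mul_le_mul_left hsum (Nat.cast_pos.2 hN)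

lemma sum_pow_mul_norm_sq_toeplitzMul_le_of_norm_tsum_le_one {a : ℕ → E →L[ℂ] F} {g : ℕ → E}
    {B : ℕ} {ρ : ℝ} (hρ : 0 ≤ ρ) (hs : ∀ z : ℂ, ‖z‖ = ρ → Summable fun n => z ^ n • a n)
    (hS : ∀ z : ℂ, ‖z‖ = ρ → ‖∑' n, z ^ n • a n‖ ≤ 1)
    (habs : Summable fun n => ρ ^ n * ‖a n‖) (hg : ∀ k ≥ B, g k = 0) (M : ℕ) :
    ∑ n ∈ range M, ρ ^ (2 * n) * ‖toeplitzMul a g n‖ ^ 2 ≤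
      ∑ k ∈ range B, ρ ^ (2 * k) * ‖g k‖ ^ 2 := by
  obtain ⟨ε, hε0, hε⟩ : ∃ ε : ℕ → ℝ, Tendsto ε atTop (𝓝 0) ∧ ∀ P, ∀ z : ℂ, ‖z‖ = ρ →
      ‖∑' n, z ^ n • a n - ∑ n ∈ range P, z ^ n • a n‖ ≤ ε P :=
    ⟨_, tendsto_sum_nat_add fun n => ρ ^ n * ‖a n‖,
      fun P z hz => norm_tsum_sub_sum_range_le hz.le (hs z hz) habs P⟩
  have hlim : Tendsto (fun P => (1 + ε P) ^ 2 * ∑ k ∈ range B, ρ ^ (2 * k) * ‖g k‖ ^ 2) atTop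
      (𝓝 (∑ k ∈ range B, ρ ^ (2 * k) * ‖g k‖ ^ 2)) := by
    simpa using ((hε0.const_add 1).pow 2).mul_const _
  refine ge_of_tendsto hlim ?_
  filter_upwards [eventually_ge_atTop M] with P hP
  obtain ⟨a', ha'P, ha'⟩ : ∃ a' : ℕ → E →L[ℂ] F, (∀ n < P, a' n = a n) ∧ ∀ n ≥ P, a' n = 0 :=
    ⟨fun n => if n < P then a n else 0, fun n hn => if_pos hn, fun n hn => if_neg (by omega)⟩
  have hpoly : ∀ z : ℂ, ∑ n ∈ range P, z ^ n • a' n = ∑ n ∈ range P, z ^ n • a n := fun z =>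
    sum_congr rfl fun n hn => by rw [ha'P n (mem_range.1 hn)]
  calc ∑ n ∈ range M, ρ ^ (2 * n) * ‖toeplitzMul a g n‖ ^ 2
      = ∑ n ∈ range M, ρ ^ (2 * n) * ‖toeplitzMul a' g n‖ ^ 2 :=
        sum_congr rfl fun n hn => by
          rw [toeplitzMul_congr (fun k hk => (ha'P k (by simp at hn; omega)).symm) fun _ _ => rfl]
    _ ≤ ∑ n ∈ range (P + B), ρ ^ (2 * n) * ‖toeplitzMul a' g n‖ ^ 2 :=
        sum_le_sum_of_subset_of_nonneg (range_subset_range.2 (by omega)) fun _ _ _ => by positivity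
    _ ≤ (1 + ε P) ^ 2 * ∑ k ∈ range B, ρ ^ (2 * k) * ‖g k‖ ^ 2 := by
        refine sum_pow_mul_norm_sq_toeplitzMul_le ha' hg (fun z hz => ?_) hρ
        rw [hpoly]
        calc ‖∑ n ∈ range P, z ^ n • a n‖
            ≤ ‖∑' n, z ^ n • a n‖ + ‖∑' n, z ^ n • a n - ∑ n ∈ range P, z ^ n • a n‖ :=
              norm_le_norm_add_norm_sub _ _
          _ ≤ 1 + ε P := add_le_add (hS z hz) (hε P z hz)

theorem IsToeplitzContraction.of_norm_tsum_le_one {a : ℕ → E →L[ℂ] F}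
    (ha : ∀ z : ℂ, ‖z‖ < 1 → Summable fun n => z ^ n • a n)
    (hS : ∀ z : ℂ, ‖z‖ < 1 → ‖∑' n, z ^ n • a n‖ ≤ 1) : IsToeplitzContraction a := by
  intro g N
  obtain ⟨g', hg'N, hg'⟩ : ∃ g' : ℕ → E, (∀ k < N, g' k = g k) ∧ ∀ k ≥ N, g' k = 0 :=
    ⟨fun k => if k < N then g k else 0, fun k hk => if_pos hk, fun k hk => if_neg (by omega)⟩
  have hlim : Tendsto (fun ρ : ℝ => ∑ n ∈ range N, ρ ^ (2 * n) * ‖toeplitzMul a g n‖ ^ 2)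
      (𝓝[<] 1) (𝓝 (∑ n ∈ range N, ‖toeplitzMul a g n‖ ^ 2)) := by
    have : Continuous fun ρ : ℝ => ∑ n ∈ range N, ρ ^ (2 * n) * ‖toeplitzMul a g n‖ ^ 2 := by
      fun_prop
    simpa using this.continuousWithinAt.tendsto (x := 1) (s := Set.Iio 1)
  refine le_of_tendsto hlim ?_
  filter_upwards [Ioo_mem_nhdsLT zero_lt_one] with ρ ⟨hρ0, hρ1⟩
  have hw : ‖(((1 + ρ) / 2 : ℝ) : ℂ)‖ = (1 + ρ) / 2 := by
    rw [Complex.norm_real, Real.norm_of_nonneg (by linarith)]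
  have habs := summable_pow_mul_norm_of_summable_pow_smul (w := (((1 + ρ) / 2 : ℝ) : ℂ)) hρ0.le
    (by linarith) (ha _ (by linarith))
  calc ∑ n ∈ range N, ρ ^ (2 * n) * ‖toeplitzMul a g n‖ ^ 2
      = ∑ n ∈ range N, ρ ^ (2 * n) * ‖toeplitzMul a g' n‖ ^ 2 :=
        sum_congr rfl fun n hn => by
          rw [toeplitzMul_congr (fun _ _ => rfl) fun k hk => (hg'N k (by simp at hn; omega)).symm]
    _ ≤ ∑ k ∈ range N, ρ ^ (2 * k) * ‖g' k‖ ^ 2 :=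
        sum_pow_mul_norm_sq_toeplitzMul_le_of_norm_tsum_le_one hρ0.le
          (fun z hz => ha z (hz ▸ hρ1)) (fun z hz => hS z (hz ▸ hρ1)) habs hg' N
    _ ≤ ∑ k ∈ range N, ‖g k‖ ^ 2 := sum_le_sum fun k hk => by
        rw [hg'N k (mem_range.1 hk)]
        exact mul_le_of_le_one_left (by positivity) (pow_le_one₀ hρ0.le hρ1.le)

lemma sum_inner_toeplitzMul_conj_pow_smul (a : ℕ → E →L[ℂ] F) (z : ℂ) (v : E) (x : F) (N : ℕ) :
    ∑ n ∈ range N, ⟪conj z ^ n • x, toeplitzMul a (fun k => conj z ^ k • v) n⟫_ℂ =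
      ∑ k ∈ range N, (‖z‖ ^ 2) ^ k • ⟪x, (∑ j ∈ range (N - k), z ^ j • a j) v⟫_ℂ := by
  simp_rw [inner_smul_left, map_pow, Complex.conj_conj, ← inner_smul_right, ← inner_sum,
    sum_pow_smul_toeplitzMul, map_smul, smul_smul, ← mul_pow, Complex.mul_conj', inner_sum]
  refine sum_congr rfl fun k _ => ?_
  rw [← Complex.ofReal_pow, ← Complex.ofReal_pow, Complex.coe_smul, inner_smul_right_eq_smul]

theorem IsToeplitzContraction.norm_tsum_le_one {a : ℕ → E →L[ℂ] F} (hT : IsToeplitzContraction a)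
    {z : ℂ} (hz : ‖z‖ < 1) (hs : Summable fun n => z ^ n • a n) :
    ‖∑' n, z ^ n • a n‖ ≤ 1 := by
  have hq0 : 0 ≤ ‖z‖ ^ 2 := by positivity
  have hq1 : ‖z‖ ^ 2 < 1 := by nlinarith [norm_nonneg z]
  refine ContinuousLinearMap.opNorm_le_bound _ zero_le_one fun v => ?_
  rw [one_mul]
  set x := (∑' n, z ^ n • a n) v
  have hbound : ∀ N,
      ‖∑ k ∈ range N, (‖z‖ ^ 2) ^ k • ⟪x, (∑ j ∈ range (N - k), z ^ j • a j) v⟫_ℂ‖ ≤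
        (∑ k ∈ range N, (‖z‖ ^ 2) ^ k) * (‖x‖ * ‖v‖) := fun N => by
    rw [← sum_inner_toeplitzMul_conj_pow_smul]
    refine (pow_le_pow_iff_left₀ (norm_nonneg _) (by positivity) two_ne_zero).1 ?_
    calc _ ≤ (∑ n ∈ range N, ‖conj z ^ n • x‖ ^ 2) *
          ∑ n ∈ range N, ‖toeplitzMul a (fun k => conj z ^ k • v) n‖ ^ 2 :=
          norm_sum_inner_sq_le _ _ _
      _ ≤ ((∑ k ∈ range N, (‖z‖ ^ 2) ^ k) * ‖x‖ ^ 2) *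
          ((∑ k ∈ range N, (‖z‖ ^ 2) ^ k) * ‖v‖ ^ 2) := by
          rw [sum_norm_sq_conj_pow_smul]
          gcongr
          exact (hT _ N).trans_eq (sum_norm_sq_conj_pow_smul z v N)
      _ = _ := by ring
  have hpartial : Tendsto (fun J => ⟪x, (∑ j ∈ range J, z ^ j • a j) v⟫_ℂ) atTop (𝓝 ⟪x, x⟫_ℂ) :=
    ((continuous_const.inner (continuous_id.clm_apply continuous_const)).tendsto _).comp
      hs.hasSum.tendsto_sum_nat
  have hlim := le_of_tendsto_of_tendsto'
    (tendsto_sum_range_geometric_smul hq0 hq1 hpartial).norm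
    ((hasSum_geometric_of_lt_one hq0 hq1).tendsto_sum_nat.mul_const _) hbound
  rw [norm_smul, Real.norm_of_nonneg (inv_nonneg.2 (by linarith)), inner_self_eq_norm_sq_to_K,
    norm_pow, RCLike.norm_ofReal, abs_norm] at hlim
  have hx : ‖x‖ ^ 2 ≤ ‖x‖ * ‖v‖ := le_of_mul_le_mul_left hlim (inv_pos.2 (by linarith))
  nlinarith [norm_nonneg x, norm_nonneg v]

theorem norm_tsum_pow_smul_le_one_iff_isToeplitzContraction {a : ℕ → E →L[ℂ] F}
    (ha : ∀ z : ℂ, ‖z‖ < 1 → Summable fun n => z ^ n • a n) :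
    (∀ z : ℂ, ‖z‖ < 1 → ‖∑' n, z ^ n • a n‖ ≤ 1) ↔ IsToeplitzContraction a :=
  ⟨IsToeplitzContraction.of_norm_tsum_le_one ha, fun hT z hz => hT.norm_tsum_le_one hz (ha z hz)⟩

end InnerProduct

section Matrix

open scoped Matrix.Norms.L2Operator

variable {m n : Type*} [Fintype m] [Fintype n] [DecidableEq n]

open scoped MatrixOrder in
lemma Matrix.posSemidef_one_sub_mul_conjTranspose_iff [DecidableEq m] (A : Matrix m n ℂ) :
    (1 - A * Aᴴ).PosSemidef ↔ ‖A‖ ≤ 1 := by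
  have hA : ‖A * Aᴴ‖ = ‖A‖ ^ 2 := by
    simpa [l2_opNorm_conjTranspose, sq] using l2_opNorm_conjTranspose_mul_self Aᴴ
  rw [← Matrix.le_iff, ← CStarAlgebra.norm_le_one_iff_of_nonneg _
    (posSemidef_self_mul_conjTranspose A).nonneg, hA, sq_le_one_iff₀ (norm_nonneg _)]

variable {𝕜 : Type*} [RCLike 𝕜]

def Matrix.toEuclideanOp : Matrix m n 𝕜 ≃L[𝕜] (EuclideanSpace 𝕜 n →L[𝕜] EuclideanSpace 𝕜 m) :=
  (toEuclideanLin.trans LinearMap.toContinuousLinearMap).toContinuousLinearEquiv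

lemma Matrix.norm_toEuclideanOp (A : Matrix m n 𝕜) : ‖toEuclideanOp A‖ = ‖A‖ := rfl

lemma Matrix.toEuclideanOp_toLp (A : Matrix m n 𝕜) (v : n → 𝕜) :
    toEuclideanOp A (WithLp.toLp 2 v) = WithLp.toLp 2 (A *ᵥ v) := rfl

end Matrix

lemma isToeplitzContraction_toEuclideanOp_iff {r t : ℕ} (s : ℕ → Matrix (Fin r) (Fin t) ℂ) :
    IsToeplitzContraction (fun n => toEuclideanOp (s n)) ↔ ∀ (g : ℕ →₀ (Fin t → ℂ)) (M : ℕ),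
      ∑ n ∈ range M, sqnormC (∑ k ∈ range (n + 1), s (n - k) *ᵥ g k) ≤
        ∑ k ∈ g.support, sqnormC (g k) := by
  have hsq : ∀ {q : ℕ} (v : Fin q → ℂ), sqnormC v = ‖WithLp.toLp 2 v‖ ^ 2 := fun v => by
    rw [EuclideanSpace.norm_sq_eq]; rfl
  rw [isToeplitzContraction_iff_finsupp]
  refine ((Finsupp.mapRange.equiv (WithLp.equiv 2 (Fin t → ℂ)).symm rfl).forall_congr
    fun g => forall_congr' fun M => ?_).symm
  rw [Finsupp.mapRange.equiv_apply, Finsupp.support_mapRange_of_injective _ _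
    (WithLp.equiv 2 (Fin t → ℂ)).symm.injective]
  simp [hsq, toeplitzMul, toEuclideanOp_toLp]

/-- Let `S(z) = Σ_n s_n zⁿ` (converging on the open unit disk).  Then `S` takes
contractive values on the disk (`I - S(z)S(z)ᴴ ⪰ 0`) if and only if the lower
triangular block Toeplitz operator `(s_{j-k})_{j≥k}` is a contraction from
`ℓ²(ℕ, ℂ^t)` into `ℓ²(ℕ, ℂ^r)`. -/
theorem contractive_iff_toeplitz_contraction (r t : ℕ)
    (s : ℕ → Matrix (Fin r) (Fin t) ℂ)
    (hconv : ∀ z ∈ Metric.ball (0 : ℂ) 1, ∀ i j,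
      Summable fun n => z ^ n * s n i j) :
    (∀ z ∈ Metric.ball (0 : ℂ) 1,
        ((1 : Matrix (Fin r) (Fin r) ℂ) -
          (Matrix.of fun i j => ∑' n, z ^ n * s n i j) *
            (Matrix.of fun i j => ∑' n, z ^ n * s n i j)ᴴ).PosSemidef) ↔
    (∀ g : ℕ →₀ (Fin t → ℂ), ∀ M : ℕ,
        ∑ n ∈ Finset.range M,
            sqnormC (∑ k ∈ Finset.range (n + 1), (s (n - k)) *ᵥ g k) ≤
          ∑ k ∈ g.support, sqnormC (g k)) := by
  have hS : ∀ z ∈ Metric.ball (0 : ℂ) 1, HasSum (fun n => z ^ n • toEuclideanOp (s n))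
      (toEuclideanOp (Matrix.of fun i j => ∑' n, z ^ n * s n i j)) := fun z hz => by
    have h : HasSum (fun n => z ^ n • s n) (Matrix.of fun i j => ∑' n, z ^ n * s n i j) :=
      Pi.hasSum.2 fun i => Pi.hasSum.2 fun j => (hconv z hz i j).hasSum
    simpa only [map_smul, ContinuousLinearEquiv.coe_coe] using
      h.mapL (toEuclideanOp : Matrix (Fin r) (Fin t) ℂ ≃L[ℂ] _).toContinuousLinearMap
  rw [← isToeplitzContraction_toEuclideanOp_iff,
    ← norm_tsum_pow_smul_le_one_iff_isToeplitzContraction fun z hz =>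
      (hS z (mem_ball_zero_iff.2 hz)).summable]
  simp only [mem_ball_zero_iff] at hS ⊢
  refine forall₂_congr fun z hz => ?_
  rw [posSemidef_one_sub_mul_conjTranspose_iff, (hS z hz).tsum_eq, norm_toEuclideanOp]
end
end

section
/- For every ρ > 0 there exists ε > 0 such that for every x ∈ ℍ with x₀² + xⱼ² < ε for j = 1, 2, 3 and every n ≥ 1, one has |P_n(x)| < ρⁿ. -/
open Quaternion

noncomputable section

/-- The normalizing constants `c_m = Σ_{j=0}^m (-1)^j T^m_j`. -/
def appellc (m : ℕ) : ℝ := ∑ j ∈ Finset.range (m + 1), (-1 : ℝ) ^ j * appellT m j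

/-- The polynomials `P_m = Q_m / c_m`. -/
def appellP (m : ℕ) (x : ℍ[ℝ]) : ℍ[ℝ] := (appellc m)⁻¹ • appellQ m x

lemma appellT_nonneg {m j : ℕ} (hj : j ≤ m) : 0 ≤ appellT m j := by
  have h : (j : ℝ) ≤ (m : ℝ) := by exact_mod_cast hj
  unfold appellT
  apply div_nonneg (by linarith) (by positivity)

lemma sum_appellT (m : ℕ) : ∑ j ∈ Finset.range (m + 1), appellT m j = 1 := by
  have hs : ∑ j ∈ Finset.range (m + 1), (j : ℝ) = m * (m + 1) / 2 := by
    have h := Finset.sum_range_id_mul_two (m + 1)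
    have h2 : ((∑ i ∈ Finset.range (m + 1), i : ℕ) : ℝ) * 2 = (m + 1) * m := by
      exact_mod_cast congrArg (Nat.cast : ℕ → ℝ) h
    push_cast at h2
    linarith
  have hnum : ∑ j ∈ Finset.range (m + 1), (2 * ((m : ℝ) - j + 1))
      = ((m : ℝ) + 1) * ((m : ℝ) + 2) := by
    have : ∑ j ∈ Finset.range (m + 1), (2 * ((m : ℝ) - j + 1))
        = ∑ j ∈ Finset.range (m + 1), ((2 * ((m : ℝ) + 1)) - 2 * (j : ℝ)) := by
      apply Finset.sum_congr rfl; intro j _; ring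
    rw [this, Finset.sum_sub_distrib, Finset.sum_const, Finset.card_range, ← Finset.mul_sum, hs]
    push_cast
    ring
  unfold appellT
  rw [← Finset.sum_div, hnum]
  have hD : ((m : ℝ) + 1) * ((m : ℝ) + 2) ≠ 0 := by positivity
  field_simp

lemma alt_sum_ge_one (m : ℕ) :
    1 ≤ ∑ j ∈ Finset.range (m + 1), (-1 : ℝ) ^ j * ((m : ℝ) + 1 - j) := by
  induction m with
  | zero => simp
  | succ m ih =>
    have hsplit : ∑ j ∈ Finset.range (m + 2), (-1 : ℝ) ^ j * ((m + 1 : ℕ) + 1 - (j : ℝ))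
        = (∑ j ∈ Finset.range (m + 2), (-1 : ℝ) ^ j * ((m : ℝ) + 1 - j))
          + ∑ j ∈ Finset.range (m + 2), (-1 : ℝ) ^ j := by
      rw [← Finset.sum_add_distrib]
      apply Finset.sum_congr rfl; intro j _
      push_cast
      ring
    have h1 : ∑ j ∈ Finset.range (m + 2), (-1 : ℝ) ^ j * ((m : ℝ) + 1 - j)
        = ∑ j ∈ Finset.range (m + 1), (-1 : ℝ) ^ j * ((m : ℝ) + 1 - j) := by
      rw [Finset.sum_range_succ]
      push_cast
      ring
    have h2 : (0 : ℝ) ≤ ∑ j ∈ Finset.range (m + 2), (-1 : ℝ) ^ j := by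
      rw [neg_one_geom_sum]
      split <;> norm_num
    rw [hsplit, h1]
    linarith

lemma appellc_ge (m : ℕ) : 2 / (((m : ℝ) + 1) * ((m : ℝ) + 2)) ≤ appellc m := by
  have hD : (0 : ℝ) < ((m : ℝ) + 1) * ((m : ℝ) + 2) := by positivity
  have : appellc m
      = (∑ j ∈ Finset.range (m + 1), (-1 : ℝ) ^ j * ((m : ℝ) + 1 - j))
        * (2 / (((m : ℝ) + 1) * ((m : ℝ) + 2))) := by
    unfold appellc appellT
    rw [Finset.sum_mul]
    apply Finset.sum_congr rfl; intro j _
    field_simp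
    ring
  rw [this]
  have h1 := alt_sum_ge_one m
  nlinarith [div_pos (by norm_num : (0:ℝ) < 2) hD]

lemma appellc_pos (m : ℕ) : 0 < appellc m := by
  have := appellc_ge m
  have hD : (0 : ℝ) < ((m : ℝ) + 1) * ((m : ℝ) + 2) := by positivity
  have : (0:ℝ) < 2 / (((m : ℝ) + 1) * ((m : ℝ) + 2)) := by positivity
  linarith [appellc_ge m]

lemma norm_appellQ_le (m : ℕ) (x : ℍ[ℝ]) : ‖appellQ m x‖ ≤ ‖x‖ ^ m := by
  calc ‖appellQ m x‖ ≤ ∑ j ∈ Finset.range (m + 1), ‖appellT m j • (x ^ (m - j) * (star x) ^ j)‖ :=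
        norm_sum_le _ _
    _ = ∑ j ∈ Finset.range (m + 1), appellT m j * ‖x‖ ^ m := by
        apply Finset.sum_congr rfl; intro j hj
        have hjm : j ≤ m := Nat.lt_succ_iff.mp (Finset.mem_range.mp hj)
        rw [norm_smul, norm_mul, norm_pow, norm_pow, norm_star,
          Real.norm_eq_abs, abs_of_nonneg (appellT_nonneg hjm), pow_sub_mul_pow _ hjm]
    _ = ‖x‖ ^ m := by rw [← Finset.sum_mul, sum_appellT, one_mul]

lemma quad_le_pow (n : ℕ) (hn : 1 ≤ n) : ((n : ℝ) + 1) * ((n : ℝ) + 2) / 2 ≤ 3 ^ n := by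
  induction n with
  | zero => omega
  | succ n ih =>
    rcases Nat.eq_or_lt_of_le hn with h | h
    · simp [← h]; norm_num
    · have hn' : 1 ≤ n := by omega
      have := ih hn'
      have h3 : (0:ℝ) < 3 ^ n := by positivity
      push_cast
      rw [pow_succ]
      push_cast at this
      nlinarith [(Nat.one_le_cast (α := ℝ)).mpr hn']

/-- For every `ρ > 0` there is `ε > 0` such that `|P_n(x)| < ρⁿ` for all `n ≥ 1`
whenever `x₀² + xⱼ² < ε` for `j = 1, 2, 3`. -/
theorem appellP_bound (ρ : ℝ) (hρ : 0 < ρ) :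
    ∃ ε > (0 : ℝ), ∀ x : ℍ[ℝ],
      x.re ^ 2 + x.imI ^ 2 < ε → x.re ^ 2 + x.imJ ^ 2 < ε → x.re ^ 2 + x.imK ^ 2 < ε →
      ∀ n : ℕ, 1 ≤ n → ‖appellP n x‖ < ρ ^ n := by
  refine ⟨ρ ^ 2 / 48, by positivity, fun x h1 h2 h3 n hn => ?_⟩
  have hns : ‖x‖ * ‖x‖ = x.re ^ 2 + x.imI ^ 2 + x.imJ ^ 2 + x.imK ^ 2 := by
    rw [← Quaternion.normSq_eq_norm_mul_self, Quaternion.normSq_def']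
  have hxlt : ‖x‖ < ρ / 4 := by
    nlinarith [norm_nonneg x, sq_nonneg x.re, sq_nonneg (‖x‖ - ρ / 4)]
  have hc := appellc_pos n
  have hcg := appellc_ge n
  have hD : (0 : ℝ) < ((n : ℝ) + 1) * ((n : ℝ) + 2) := by positivity
  have hinv : (appellc n)⁻¹ ≤ ((n : ℝ) + 1) * ((n : ℝ) + 2) / 2 := by
    have h2 : (0:ℝ) < 2 / (((n : ℝ) + 1) * ((n : ℝ) + 2)) := by positivity
    calc (appellc n)⁻¹ ≤ (2 / (((n : ℝ) + 1) * ((n : ℝ) + 2)))⁻¹ :=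
          inv_anti₀ h2 hcg
      _ = ((n : ℝ) + 1) * ((n : ℝ) + 2) / 2 := by
          rw [inv_div]
  have hP : ‖appellP n x‖ ≤ (((n : ℝ) + 1) * ((n : ℝ) + 2) / 2) * ‖x‖ ^ n := by
    unfold appellP
    rw [norm_smul, Real.norm_eq_abs, abs_of_pos (inv_pos.mpr hc)]
    exact mul_le_mul hinv (norm_appellQ_le n x) (norm_nonneg _) (by positivity)
  have hP3 : ‖appellP n x‖ ≤ (3 * ‖x‖) ^ n := by
    rw [mul_pow]
    calc ‖appellP n x‖ ≤ (((n : ℝ) + 1) * ((n : ℝ) + 2) / 2) * ‖x‖ ^ n := hP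
      _ ≤ 3 ^ n * ‖x‖ ^ n := by
          apply mul_le_mul_of_nonneg_right (quad_le_pow n hn) (by positivity)
  calc ‖appellP n x‖ ≤ (3 * ‖x‖) ^ n := hP3
    _ < ρ ^ n := by
        apply pow_lt_pow_left₀ _ (by positivity) (by omega)
        linarith
end
end

section
/- Let N, r, s ∈ ℕ and let A ∈ ℍ^{N×N}, B ∈ ℍ^{N×s}, C ∈ ℍ^{r×N}, D ∈ ℍ^{r×s} satisfy AᴴA + CᴴC = I_N, BᴴB + DᴴD = I_s, and DᴴC + BᴴA = 0 (i.e. the block matrix [[A, B], [C, D]] is an isometry, equivalently its conjugate transpose is a co-isometry). Define b₀ = D and b_n = C·A^{n−1}·B ∈ ℍ^{r×s} for n ≥ 1. Then the series Σ_{n=0}^∞ b_nᴴ·b_n converges with sum I_s, and for every k ≥ 1 the series Σ_{n=0}^∞ b_nᴴ·b_{n+k} converges with sum 0. (Equivalently, the lower triangular block Toeplitz operator built from the sequence (b_n) is an isometry from ℓ²(ℕ, ℍ^s) into ℓ²(ℕ, ℍ^r); when [[A,B],[C,D]] is unitary and r = s this Toeplitz operator is unitary, and the multiplier S(x) = D +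 Σ_{n≥1} P_n(x)·C·A^{n−1}·B is a Blaschke function whose multiplication operator is an isometry of the Hardy space.) -/
open Quaternion Matrix

noncomputable section

open Filter Topology Finset

/-! Since the column `[A; C]` is an isometry, `(A X)ᴴ (A Y) + (C X)ᴴ (C Y) = Xᴴ Y`. Applied to
`X = Aᵐ B`, `Y = Aᵐ⁺ᵏ B` this telescopes the partial sums to
`∑_{n ≤ m} b_nᴴ b_{n+k} = δ_{k,0} - (Aᵐ B)ᴴ (Aᵐ⁺ᵏ B)`, so everything reduces to `Aᵐ B → 0`.

The norms `‖Aᵐ B‖` decrease and `∑ ‖C Aᵐ B‖² ≤ ‖B‖²`, so every limit point `v` of `Aᵐ B` lies in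
the unobservable subspace `K = {Y | ∀ q, C A^q Y = 0}`. On `K` the map `A` is isometric, hence
bijective by finite dimensionality; together with `Bᴴ A = -Dᴴ C` this gives `(Aᵐ B)ᴴ Y = 0` for
all `Y ∈ K` and all `m`. Hence `vᴴ v = 0`, i.e. `v = 0`. -/

namespace Matrix

section Frobenius

attribute [local instance] frobeniusSeminormedAddCommGroup frobeniusNormedAddCommGroup

variable {l m n α : Type*} [Fintype l] [Fintype m] [Fintype n]

theorem frobenius_norm_sq [SeminormedAddCommGroup α] (A : Matrix m n α) :
    ‖A‖ ^ 2 = ∑ i, ∑ j, ‖A i j‖ ^ 2 := by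
  change ‖WithLp.toLp 2 fun i => WithLp.toLp 2 fun j => A i j‖ ^ 2 = _
  simp [PiLp.norm_sq_eq_of_L2]

theorem frobenius_norm_mul_le [NormedRing α] (A : Matrix l m α) (B : Matrix m n α) :
    ‖A * B‖ ≤ ‖A‖ * ‖B‖ := by
  refine (pow_le_pow_iff_left₀ (norm_nonneg _) (by positivity) two_ne_zero).1 ?_
  calc ‖A * B‖ ^ 2 = ∑ i, ∑ j, ‖(A * B) i j‖ ^ 2 := frobenius_norm_sq _
    _ ≤ ∑ i, ∑ j, (∑ k, ‖A i k‖ ^ 2) * ∑ k, ‖B k j‖ ^ 2 := by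
      gcongr with i _ j _
      calc ‖(A * B) i j‖ ^ 2 ≤ (∑ k, ‖A i k‖ * ‖B k j‖) ^ 2 := by
            gcongr
            exact norm_sum_le_of_le _ fun k _ => norm_mul_le _ _
        _ ≤ (∑ k, ‖A i k‖ ^ 2) * ∑ k, ‖B k j‖ ^ 2 := Finset.sum_mul_sq_le_sq_mul_sq _ _ _
    _ = (‖A‖ * ‖B‖) ^ 2 := by
      rw [mul_pow, frobenius_norm_sq, frobenius_norm_sq B,
        Finset.sum_comm (f := fun k j => ‖B k j‖ ^ 2), Finset.sum_mul_sum]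

theorem trace_conjTranspose_mul_self_quaternion (X : Matrix m n ℍ[ℝ]) :
    trace (Xᴴ * X) = ((‖X‖ ^ 2 : ℝ) : ℍ[ℝ]) := by
  calc trace (Xᴴ * X) = ∑ j, ∑ i, star (X i j) * X i j := by simp [trace, mul_apply]
    _ = ∑ j, ∑ i, ((‖X i j‖ ^ 2 : ℝ) : ℍ[ℝ]) := by
      simp only [Quaternion.star_mul_self, normSq_eq_norm_mul_self, sq]
    _ = ((‖X‖ ^ 2 : ℝ) : ℍ[ℝ]) := by
      simp only [frobenius_norm_sq, ← Quaternion.algebraMap_def, map_sum]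
      exact Finset.sum_comm

theorem conjTranspose_mul_self_eq_zero_quaternion {X : Matrix m n ℍ[ℝ]} :
    Xᴴ * X = 0 ↔ X = 0 := by
  refine ⟨fun h => ?_, fun h => by rw [h, Matrix.mul_zero]⟩
  have := trace_conjTranspose_mul_self_quaternion X
  rw [h, trace_zero, ← Quaternion.coe_zero, Quaternion.coe_inj, eq_comm, sq_eq_zero_iff,
    norm_eq_zero] at this
  exact this

end Frobenius

end Matrix

namespace Colligation

section Algebra

variable {α n r s : Type*} [Ring α] [StarRing α] [Fintype n] [DecidableEq n] [Fintype r]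
  [DecidableEq s] {A : Matrix n n α} {B : Matrix n s α} {C : Matrix r n α}
  {D : Matrix r s α}

def markovCoeff (A : Matrix n n α) (B : Matrix n s α) (C : Matrix r n α) (D : Matrix r s α) :
    ℕ → Matrix r s α
  | 0 => D
  | k + 1 => C * A ^ k * B

theorem conjTranspose_mul_mul_add {p q : Type*} (h1 : Aᴴ * A + Cᴴ * C = 1) (X : Matrix n p α)
    (Y : Matrix n q α) :
    (A * X)ᴴ * (A * Y) + (C * X)ᴴ * (C * Y) = Xᴴ * Y := by
  rw [conjTranspose_mul, conjTranspose_mul, Matrix.mul_assoc, Matrix.mul_assoc,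
    ← Matrix.mul_assoc Aᴴ, ← Matrix.mul_assoc Cᴴ, ← Matrix.mul_add, ← Matrix.add_mul, h1,
    Matrix.one_mul]

theorem sum_range_succ_conjTranspose_markovCoeff_mul (h1 : Aᴴ * A + Cᴴ * C = 1)
    (h2 : Bᴴ * B + Dᴴ * D = 1) (h3 : Dᴴ * C + Bᴴ * A = 0) (k m : ℕ) :
    ∑ i ∈ range (m + 1), (markovCoeff A B C D i)ᴴ * markovCoeff A B C D (i + k) =
      (if k = 0 then 1 else 0) - (A ^ m * B)ᴴ * (A ^ (m + k) * B) := by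
  induction m with
  | zero =>
    simp only [sum_range_one, zero_add, pow_zero, Matrix.one_mul]
    cases k with
    | zero => rw [if_pos rfl, pow_zero, Matrix.one_mul]; exact eq_sub_of_add_eq' h2
    | succ k =>
      rw [markovCoeff, markovCoeff, if_neg k.succ_ne_zero, zero_sub, pow_succ',
        ← Matrix.mul_assoc, Matrix.mul_assoc, Matrix.mul_assoc, ← Matrix.mul_assoc Dᴴ,
        eq_neg_of_add_eq_zero_left h3, Matrix.neg_mul, Matrix.mul_assoc, Matrix.mul_assoc]
  | succ m ih =>
    rw [sum_range_succ, ih, add_right_comm, markovCoeff, markovCoeff, Matrix.mul_assoc,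
      Matrix.mul_assoc, ← conjTranspose_mul_mul_add h1 (A ^ m * B),
      ← Matrix.mul_assoc A, ← Matrix.mul_assoc A, ← pow_succ', ← pow_succ']
    abel

end Algebra

section Quaternion

attribute [local instance] frobeniusSeminormedAddCommGroup frobeniusNormedAddCommGroup
  frobeniusNormedSpace

variable {n r s p : Type*} [Fintype n] [DecidableEq n] {A : Matrix n n ℍ[ℝ]} {C : Matrix r n ℍ[ℝ]}

def unobservable (A : Matrix n n ℍ[ℝ]) (C : Matrix r n ℍ[ℝ]) (p : Type*) :
    Submodule ℝ (Matrix n p ℍ[ℝ]) where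
  carrier := {Y | ∀ q : ℕ, C * (A ^ q * Y) = 0}
  add_mem' hX hY q := by rw [Matrix.mul_add, Matrix.mul_add, hX q, hY q, add_zero]
  zero_mem' q := by rw [Matrix.mul_zero, Matrix.mul_zero]
  smul_mem' c Y hY q := by rw [Matrix.mul_smul, Matrix.mul_smul, hY q, smul_zero]

theorem mul_mem_unobservable {Y : Matrix n p ℍ[ℝ]} (hY : Y ∈ unobservable A C p) :
    A * Y ∈ unobservable A C p := fun q => by
  rw [← Matrix.mul_assoc (A ^ q), ← pow_succ]
  exact hY (q + 1)

theorem mul_eq_zero_of_mem_unobservable {Y : Matrix n p ℍ[ℝ]} (hY : Y ∈ unobservable A C p) :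
    C * Y = 0 := by
  simpa using hY 0

theorem conjTranspose_mul_mul_of_mem_unobservable {q : Type*} [Fintype r]
    (h1 : Aᴴ * A + Cᴴ * C = 1) {Y : Matrix n p ℍ[ℝ]} (hY : Y ∈ unobservable A C p)
    (X : Matrix n q ℍ[ℝ]) :
    (A * X)ᴴ * (A * Y) = Xᴴ * Y := by
  simpa [mul_eq_zero_of_mem_unobservable hY] using conjTranspose_mul_mul_add h1 X Y

theorem conjTranspose_mul_mul_eq_self_of_mem_unobservable [Fintype r]
    (h1 : Aᴴ * A + Cᴴ * C = 1) {Y : Matrix n p ℍ[ℝ]} (hY : Y ∈ unobservable A C p) :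
    Aᴴ * (A * Y) = Y := by
  have := conjTranspose_mul_mul_of_mem_unobservable h1 hY (1 : Matrix n n ℍ[ℝ])
  rwa [Matrix.mul_one, conjTranspose_one, Matrix.one_mul] at this

theorem exists_mul_eq_of_mem_unobservable [Fintype r] [Fintype p] (h1 : Aᴴ * A + Cᴴ * C = 1)
    {Y : Matrix n p ℍ[ℝ]} (hY : Y ∈ unobservable A C p) : ∃ Z ∈ unobservable A C p, A * Z = Y := by
  let L : Matrix n p ℍ[ℝ] →ₗ[ℝ] Matrix n p ℍ[ℝ] :=
    { toFun := (A * ·), map_add' := Matrix.mul_add A, map_smul' := Matrix.mul_smul A }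
  let f := L.restrict (p := unobservable A C p) (q := unobservable A C p)
    fun _ hZ => mul_mem_unobservable hZ
  have hf : Function.Injective f := fun Z Z' h => Subtype.ext <| by
    have h' : A * (Z : Matrix n p ℍ[ℝ]) = A * (Z' : Matrix n p ℍ[ℝ]) := congrArg Subtype.val h
    rw [← conjTranspose_mul_mul_eq_self_of_mem_unobservable h1 Z.2,
      ← conjTranspose_mul_mul_eq_self_of_mem_unobservable h1 Z'.2, h']
  obtain ⟨Z, hZ⟩ := LinearMap.injective_iff_surjective.1 hf ⟨Y, hY⟩
  exact ⟨Z, Z.2, congrArg Subtype.val hZ⟩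

variable [Fintype r] [Fintype p]

theorem norm_mul_sq_add_norm_mul_sq (h1 : Aᴴ * A + Cᴴ * C = 1) (X : Matrix n p ℍ[ℝ]) :
    ‖A * X‖ ^ 2 + ‖C * X‖ ^ 2 = ‖X‖ ^ 2 := by
  have := congrArg trace (conjTranspose_mul_mul_add h1 X X)
  simp only [trace_add, trace_conjTranspose_mul_self_quaternion, ← Quaternion.coe_add] at this
  exact Quaternion.coe_injective this

theorem norm_mul_le_of_isometry (h1 : Aᴴ * A + Cᴴ * C = 1) (X : Matrix n p ℍ[ℝ]) :
    ‖A * X‖ ≤ ‖X‖ :=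
  (pow_le_pow_iff_left₀ (norm_nonneg _) (norm_nonneg _) two_ne_zero).1 <| by
    linarith [norm_mul_sq_add_norm_mul_sq h1 X, sq_nonneg ‖C * X‖]

theorem antitone_norm_pow_mul (h1 : Aᴴ * A + Cᴴ * C = 1) (X : Matrix n p ℍ[ℝ]) :
    Antitone fun m => ‖A ^ m * X‖ :=
  antitone_nat_of_succ_le fun m => by
    rw [pow_succ', Matrix.mul_assoc]
    exact norm_mul_le_of_isometry h1 _

theorem sum_range_norm_sq_add_norm_sq (h1 : Aᴴ * A + Cᴴ * C = 1) (X : Matrix n p ℍ[ℝ])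
    (m : ℕ) :
    ∑ q ∈ range m, ‖C * (A ^ q * X)‖ ^ 2 + ‖A ^ m * X‖ ^ 2 = ‖X‖ ^ 2 := by
  induction m with
  | zero => rw [sum_range_zero, zero_add, pow_zero, Matrix.one_mul]
  | succ m ih =>
    rw [sum_range_succ, ← ih, ← norm_mul_sq_add_norm_mul_sq h1 (A ^ m * X), pow_succ' A,
      Matrix.mul_assoc]
    ring

theorem summable_norm_sq_mul_pow_mul (h1 : Aᴴ * A + Cᴴ * C = 1) (X : Matrix n p ℍ[ℝ]) :
    Summable fun q => ‖C * (A ^ q * X)‖ ^ 2 :=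
  summable_of_sum_range_le (c := ‖X‖ ^ 2) (fun _ => sq_nonneg _) fun m => by
    linarith [sum_range_norm_sq_add_norm_sq h1 X m, sq_nonneg ‖A ^ m * X‖]

theorem tendsto_mul_pow_mul_zero (h1 : Aᴴ * A + Cᴴ * C = 1) (X : Matrix n p ℍ[ℝ]) :
    Tendsto (fun q => C * (A ^ q * X)) atTop (𝓝 0) := by
  refine tendsto_zero_iff_norm_tendsto_zero.2 ?_
  simpa [Real.sqrt_sq (norm_nonneg _)] using
    (summable_norm_sq_mul_pow_mul h1 X).tendsto_atTop_zero.sqrt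

theorem mem_unobservable_of_tendsto (h1 : Aᴴ * A + Cᴴ * C = 1) {X v : Matrix n p ℍ[ℝ]}
    {σ : ℕ → ℕ} (hσ : Tendsto σ atTop atTop) (hv : Tendsto (fun i => A ^ σ i * X) atTop (𝓝 v)) :
    v ∈ unobservable A C p := fun q => by
  have hlim : Tendsto (fun i => C * (A ^ q * (A ^ σ i * X))) atTop (𝓝 (C * (A ^ q * v))) :=
    ((continuous_const.matrix_mul (continuous_const.matrix_mul continuous_id)).tendsto v).comp hv
  have hzero : Tendsto (fun i => C * (A ^ q * (A ^ σ i * X))) atTop (𝓝 0) := by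
    simp_rw [← Matrix.mul_assoc (A ^ q), ← pow_add, add_comm q]
    exact (tendsto_mul_pow_mul_zero h1 X).comp ((tendsto_add_atTop_nat q).comp hσ)
  exact tendsto_nhds_unique hlim hzero

variable {B : Matrix n s ℍ[ℝ]} {D : Matrix r s ℍ[ℝ]}

theorem conjTranspose_mul_eq_zero_of_mem_unobservable (h1 : Aᴴ * A + Cᴴ * C = 1)
    (h3 : Dᴴ * C + Bᴴ * A = 0) {Y : Matrix n p ℍ[ℝ]} (hY : Y ∈ unobservable A C p) :
    Bᴴ * Y = 0 := by
  obtain ⟨Z, hZ, rfl⟩ := exists_mul_eq_of_mem_unobservable h1 hY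
  rw [← Matrix.mul_assoc, eq_neg_of_add_eq_zero_right h3, Matrix.neg_mul, Matrix.mul_assoc,
    mul_eq_zero_of_mem_unobservable hZ, Matrix.mul_zero, neg_zero]

theorem conjTranspose_pow_mul_mul_eq_zero_of_mem_unobservable (h1 : Aᴴ * A + Cᴴ * C = 1)
    (h3 : Dᴴ * C + Bᴴ * A = 0) (m : ℕ) {Y : Matrix n p ℍ[ℝ]} (hY : Y ∈ unobservable A C p) :
    (A ^ m * B)ᴴ * Y = 0 := by
  induction m generalizing Y with
  | zero =>
    rw [pow_zero, Matrix.one_mul]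
    exact conjTranspose_mul_eq_zero_of_mem_unobservable h1 h3 hY
  | succ m ih =>
    obtain ⟨Z, hZ, rfl⟩ := exists_mul_eq_of_mem_unobservable h1 hY
    rw [pow_succ', Matrix.mul_assoc, conjTranspose_mul_mul_of_mem_unobservable h1 hZ, ih hZ]

theorem tendsto_pow_mul_zero [Fintype s] (h1 : Aᴴ * A + Cᴴ * C = 1)
    (h3 : Dᴴ * C + Bᴴ * A = 0) :
    Tendsto (fun m => A ^ m * B) atTop (𝓝 0) := by
  obtain ⟨v, -, σ, hσ, hv⟩ := tendsto_subseq_of_bounded (Metric.isBounded_closedBall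
    (x := (0 : Matrix n s ℍ[ℝ])) (r := ‖B‖)) fun m => mem_closedBall_zero_iff.2 <| by
      simpa using antitone_norm_pow_mul h1 B (Nat.zero_le m)
  have hvK : v ∈ unobservable A C s := mem_unobservable_of_tendsto h1 hσ.tendsto_atTop hv
  have hv0 : v = 0 := by
    rw [← conjTranspose_mul_self_eq_zero_quaternion]
    have hlim : Tendsto (fun i => (A ^ σ i * B)ᴴ * v) atTop (𝓝 (vᴴ * v)) :=
      ((continuous_id.matrix_conjTranspose.matrix_mul continuous_const).tendsto v).comp hv
    exact tendsto_nhds_unique hlim <| tendsto_const_nhds.congr fun i =>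
      (conjTranspose_pow_mul_mul_eq_zero_of_mem_unobservable h1 h3 (σ i) hvK).symm
  subst hv0
  refine tendsto_zero_iff_norm_tendsto_zero.2 <|
    (tendsto_iff_tendsto_subseq_of_antitone (antitone_norm_pow_mul h1 B) hσ.tendsto_atTop).2 ?_
  exact tendsto_zero_iff_norm_tendsto_zero.1 hv

theorem summable_norm_sq_markovCoeff [Fintype s] (h1 : Aᴴ * A + Cᴴ * C = 1) :
    Summable fun i => ‖markovCoeff A B C D i‖ ^ 2 := by
  rw [← summable_nat_add_iff 1]
  simpa [markovCoeff, Matrix.mul_assoc] using summable_norm_sq_mul_pow_mul h1 B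

theorem summable_conjTranspose_markovCoeff_mul [Fintype s] (h1 : Aᴴ * A + Cᴴ * C = 1) (k : ℕ) :
    Summable fun i => (markovCoeff A B C D i)ᴴ * markovCoeff A B C D (i + k) := by
  have hb := summable_norm_sq_markovCoeff (B := B) (D := D) h1
  refine .of_norm_bounded ((hb.add ((summable_nat_add_iff k).2 hb)).div_const 2) fun i => ?_
  set b := markovCoeff A B C D
  calc ‖(b i)ᴴ * b (i + k)‖ ≤ ‖(b i)ᴴ‖ * ‖b (i + k)‖ := frobenius_norm_mul_le _ _
    _ ≤ (‖b i‖ ^ 2 + ‖b (i + k)‖ ^ 2) / 2 := by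
      rw [frobenius_norm_conjTranspose]
      nlinarith [sq_nonneg (‖b i‖ - ‖b (i + k)‖)]

theorem hasSum_conjTranspose_markovCoeff_mul [Fintype s] [DecidableEq s]
    (h1 : Aᴴ * A + Cᴴ * C = 1) (h2 : Bᴴ * B + Dᴴ * D = 1) (h3 : Dᴴ * C + Bᴴ * A = 0) (k : ℕ) :
    HasSum (fun i => (markovCoeff A B C D i)ᴴ * markovCoeff A B C D (i + k))
      (if k = 0 then 1 else 0) := by
  refine (summable_conjTranspose_markovCoeff_mul h1 k).hasSum_iff_tendsto_nat.2 <|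
    (tendsto_add_atTop_iff_nat 1).1 ?_
  simp_rw [sum_range_succ_conjTranspose_markovCoeff_mul h1 h2 h3]
  have hx := tendsto_pow_mul_zero h1 h3
  have := ((continuous_fst.matrix_conjTranspose.matrix_mul continuous_snd).tendsto (0, 0)).comp
    (hx.prodMk_nhds (hx.comp (tendsto_add_atTop_nat k)))
  simpa using tendsto_const_nhds.sub this

end Quaternion

end Colligation

open Colligation in
/-- If the block matrix `[[A, B], [C, D]]` with quaternionic entries is an isometry
(`AᴴA + CᴴC = I`, `BᴴB + DᴴD = I`, `DᴴC + BᴴA = 0`), then the coefficients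
`b₀ = D`, `b_n = C A^{n-1} B` satisfy `Σ_n b_nᴴ b_n = I` and `Σ_n b_nᴴ b_{n+k} = 0`
for every `k ≥ 1`; equivalently, the lower triangular block Toeplitz operator built
from `(b_n)` is an isometry from `ℓ²(ℕ, ℍ^s)` into `ℓ²(ℕ, ℍ^r)`. -/
theorem blaschke_toeplitz_isometry (N r s : ℕ)
    (A : Matrix (Fin N) (Fin N) ℍ[ℝ]) (B : Matrix (Fin N) (Fin s) ℍ[ℝ])
    (C : Matrix (Fin r) (Fin N) ℍ[ℝ]) (D : Matrix (Fin r) (Fin s) ℍ[ℝ])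
    (h1 : Aᴴ * A + Cᴴ * C = 1) (h2 : Bᴴ * B + Dᴴ * D = 1)
    (h3 : Dᴴ * C + Bᴴ * A = 0)
    (b : ℕ → Matrix (Fin r) (Fin s) ℍ[ℝ])
    (hb0 : b 0 = D) (hbn : ∀ n : ℕ, b (n + 1) = C * A ^ n * B) :
    HasSum (fun n => (b n)ᴴ * b n) (1 : Matrix (Fin s) (Fin s) ℍ[ℝ]) ∧
    ∀ k : ℕ, 1 ≤ k →
      HasSum (fun n => (b n)ᴴ * b (n + k)) (0 : Matrix (Fin s) (Fin s) ℍ[ℝ]) := by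
  obtain rfl : b = markovCoeff A B C D :=
    funext fun n => by cases n <;> simp [markovCoeff, hb0, hbn]
  have h := hasSum_conjTranspose_markovCoeff_mul h1 h2 h3
  exact ⟨by simpa using h 0, fun k hk => by simpa [Nat.one_le_iff_ne_zero.1 hk] using h k⟩
end
end
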